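/- arXiv:1804.07929 — 8 statements merged into one kernel-verified Lean document; each statement's English description precedes it below -/
import Mathlib

section
/- Let p be a prime with p ≡ 3 (mod 4). Then ((p-1)/2)! ≡ (-1)^N (mod p), where N is the number of quadratic nonresidues modulo p lying strictly between 0 and p/2. -/
/-- Dirichlet's congruence: for a prime `p ≡ 3 (mod 4)`,
`((p-1)/2)! ≡ (-1)^N (mod p)` where `N` is the number of quadratic
nonresidues modulo `p` strictly between `0` and `p/2`. -/
theorem dirichlet_congruence (p : ℕ) (hp : p.Prime) (hp4 : p % 4 = 3)
    (N : ℕ)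
    (hN : N = Nat.card {a : ℕ // 0 < a ∧ 2 * a < p ∧ ¬ ∃ x : ZMod p, x * x = (a : ZMod p)}) :
    ((Nat.factorial ((p - 1) / 2) : ℤ)) ≡ (-1) ^ N [ZMOD p] := by
  classical
  haveI : Fact p.Prime := ⟨hp⟩
  set m := (p - 1) / 2 with hm
  have hp5 : 3 ≤ p := by
    rcases Nat.lt_or_ge p 3 with h | h
    · interval_cases p <;> omega
    · exact h
  have hpm : p = 2 * m + 1 := by omega
  have hmodd : m % 2 = 1 := by omega
  rw [← ZMod.intCast_eq_intCast_iff]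
  push_cast
  set F : ZMod p := (Nat.factorial m : ZMod p) with hF
  -- the half Ico
  set s : Finset ℕ := Finset.Ico 1 (m + 1) with hs
  have hFprod : F = ∏ a ∈ s, (a : ZMod p) := by
    rw [hF, ← Finset.prod_Ico_id_eq_factorial]; push_cast; rfl
  -- Wilson: F^2 = 1
  have hF2 : F ^ 2 = 1 := by
    have hw : ((Nat.factorial (p-1)) : ZMod p) = -1 := ZMod.wilsons_lemma p
    have hfull : (∏ a ∈ Finset.Ico 1 p, (a : ZMod p)) = -1 := by
      have h : Finset.Ico 1 p = Finset.Ico 1 ((p - 1) + 1) := by congr 1; omega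
      rw [h, ← Nat.cast_prod, Finset.prod_Ico_id_eq_factorial, hw]
    have hsplit : (∏ a ∈ Finset.Ico 1 (m + 1), (a : ZMod p)) *
        (∏ a ∈ Finset.Ico (m + 1) p, (a : ZMod p)) = -1 := by
      rw [Finset.prod_Ico_consecutive _ (by omega) (by omega)]; exact hfull
    have hrefl : (∏ a ∈ Finset.Ico (m + 1) p, (a : ZMod p)) =
        ∏ b ∈ Finset.Ico 1 (m + 1), (-(b : ZMod p)) := by
      refine Finset.prod_nbij' (fun a => p - a) (fun b => p - b) ?_ ?_ ?_ ?_ ?_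
      · intro a ha; simp only [Finset.mem_Ico] at *; omega
      · intro b hb; simp only [Finset.mem_Ico] at *; omega
      · intro a ha; simp only [Finset.mem_Ico] at ha; show p - (p - a) = a; omega
      · intro b hb; simp only [Finset.mem_Ico] at hb; show p - (p - b) = b; omega
      · intro a ha
        simp only [Finset.mem_Ico] at ha
        have : ((p - a : ℕ) : ZMod p) = (p : ZMod p) - a := by
          push_cast [Nat.cast_sub (by omega : a ≤ p)]; ring
        rw [this, ZMod.natCast_self]; ring
    have hcard : (Finset.Ico 1 (m + 1)).card = m := by simp
    have hnegp : (∏ b ∈ Finset.Ico 1 (m + 1), (-(b : ZMod p))) =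
        (-1) ^ m * ∏ b ∈ Finset.Ico 1 (m + 1), (b : ZMod p) := by
      have e : ∏ b ∈ Finset.Ico 1 (m + 1), (-(b : ZMod p)) =
          ∏ b ∈ Finset.Ico 1 (m + 1), ((-1) * (b : ZMod p)) :=
        Finset.prod_congr rfl (fun b _ => (neg_one_mul _).symm)
      rw [e, Finset.prod_mul_distrib, Finset.prod_const, hcard]
    rw [hrefl, hnegp] at hsplit
    have hneg : ((-1 : ZMod p)) ^ m = -1 := Odd.neg_one_pow ⟨m / 2, by omega⟩
    rw [hneg] at hsplit
    have : -(F ^ 2) = -1 := by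
      rw [← hsplit, hFprod]; ring
    linear_combination -this
  -- Euler / Legendre product
  let P : ℕ → Prop := fun a => ¬ ∃ x : ZMod p, x * x = (a : ZMod p)
  have hFm : F ^ (p / 2) = (-1) ^ ((s.filter P).card) := by
    have h1 : (((∏ a ∈ s, legendreSym p (a : ℤ)) : ℤ) : ZMod p) = F ^ (p / 2) := by
      push_cast
      rw [hFprod, ← Finset.prod_pow]
      exact Finset.prod_congr rfl (fun a _ => by rw [legendreSym.eq_pow]; push_cast; ring)
    have h2 : (∏ a ∈ s, legendreSym p (a : ℤ)) = (-1) ^ ((s.filter P).card) := by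
      rw [← Finset.prod_filter_mul_prod_filter_not s P]
      have e1 : ∀ a ∈ s.filter P, legendreSym p (a : ℤ) = -1 := by
        intro a ha
        rw [Finset.mem_filter] at ha
        rw [legendreSym.eq_neg_one_iff]
        intro ⟨r, hr⟩
        exact ha.2 ⟨r, by push_cast at hr ⊢; exact hr.symm⟩
      have e2 : ∀ a ∈ s.filter (fun a => ¬ P a), legendreSym p (a : ℤ) = 1 := by
        intro a ha
        rw [Finset.mem_filter, hs, Finset.mem_Ico] at ha
        have ha0 : ((a : ℤ) : ZMod p) ≠ 0 := by
          push_cast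
          rw [Ne, ZMod.natCast_eq_zero_iff]
          intro hdvd
          have := Nat.le_of_dvd (by omega) hdvd
          omega
        rw [legendreSym.eq_one_iff p ha0]
        obtain ⟨x, hx⟩ := not_not.mp ha.2
        exact ⟨x, by push_cast; exact hx.symm⟩
      rw [Finset.prod_congr rfl e1, Finset.prod_congr rfl e2,
        Finset.prod_const, Finset.prod_const, one_pow, mul_one]
    rw [← h1, h2]; push_cast; ring
  -- identify N
  have hNc : N = (s.filter P).card := by
    rw [hN]
    have hset : {a : ℕ | 0 < a ∧ 2 * a < p ∧ P a} = ↑(s.filter P) := by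
      ext a
      simp only [Set.mem_setOf_eq, Finset.coe_filter, hs, Finset.mem_Ico, Set.mem_setOf_eq]
      constructor
      · rintro ⟨h1, h2, h3⟩; exact ⟨⟨by omega, by omega⟩, h3⟩
      · rintro ⟨⟨h1, h2⟩, h3⟩; exact ⟨by omega, by omega, h3⟩
    calc Nat.card {a : ℕ // 0 < a ∧ 2 * a < p ∧ P a}
        = ({a : ℕ | 0 < a ∧ 2 * a < p ∧ P a}).ncard := Nat.card_coe_set_eq _
      _ = (s.filter P).card := by rw [hset, Set.ncard_coe_finset]
  -- finish: p/2 = m, m odd, F^2 = 1 ⇒ F^(p/2) = F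
  have hp2 : p / 2 = m := by omega
  have hFF : F ^ (p / 2) = F := by
    rw [hp2]
    have : m = 2 * (m / 2) + 1 := by omega
    rw [this, pow_add, pow_mul, hF2, one_pow, pow_one, one_mul]
  rw [hNc, ← hFm, hFF]
end

section
/- For every prime p > 3, (p-1)! ≡ p·B_{p-1} - p (mod p^2), where the congruence is interpreted in the ring of p-adic integers (p·B_{p-1} is a p-adic integer by von Staudt–Clausen). -/
/-!
Write `k ^ (p - 1) = 1 + p q_k` for `0 < k < p` (Fermat quotients) and `(p - 1)! = -1 + p w`
(Wilson quotient). Expanding `((p - 1)!) ^ (p - 1) = ∏ k ^ (p - 1)` modulo `p²` in both ways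
gives Lerch's formula `∑ q_k ≡ w (mod p)`, that is
`(p - 1)! ≡ ∑_{k<p} k ^ (p - 1) - p (mod p²)`.
Faulhaber's formula writes `∑_{k<p} k ^ (p - 1)` as `p B_{p-1}` plus the terms
`(p B_i) (p choose i) p ^ (p - i - 2)` for `i < p - 1`. Since `p B_i` is `p`-integral by von
Staudt–Clausen and `B_{p-2} = 0`, all of these are divisible by `p²`.
-/

open Finset Nat

theorem Int.prod_one_add_mul_modEq_sq {ι : Type*} (N : ℤ) (f : ι → ℤ) (s : Finset ι) :
    ∏ i ∈ s, (1 + N * f i) ≡ 1 + N * ∑ i ∈ s, f i [ZMOD N ^ 2] := by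
  classical
  induction s using Finset.induction_on with
  | empty => simp
  | insert a s ha ih =>
    rw [prod_insert ha, sum_insert ha]
    calc (1 + N * f a) * ∏ i ∈ s, (1 + N * f i)
        ≡ (1 + N * f a) * (1 + N * ∑ i ∈ s, f i) [ZMOD N ^ 2] := ih.mul_left _
      _ ≡ 1 + N * (f a + ∑ i ∈ s, f i) [ZMOD N ^ 2] :=
        Int.modEq_iff_dvd.mpr ⟨-(f a * ∑ i ∈ s, f i), by ring⟩

theorem Nat.Prime.isCoprime_of_mem_Ico {p k : ℕ} (hp : p.Prime) (hk : k ∈ Ico 1 p) :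
    IsCoprime (k : ℤ) p :=
  Nat.isCoprime_iff_coprime.mpr (coprime_of_lt_prime (by grind) (mem_Ico.mp hk).2 hp).symm

def fermatQuotient (p : ℕ) (a : ℤ) : ℤ := (a ^ (p - 1) - 1) / p

theorem pow_sub_one_eq_one_add_mul_fermatQuotient {p : ℕ} (hp : p.Prime) {a : ℤ}
    (ha : IsCoprime a p) : a ^ (p - 1) = 1 + p * fermatQuotient p a := by
  rw [fermatQuotient, Int.mul_ediv_cancel' (Int.prime_dvd_pow_sub_one hp ha)]
  ring

def wilsonQuotient (p : ℕ) : ℤ := ((p - 1)! + 1 : ℤ) / p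

theorem factorial_sub_one_eq_neg_one_add_mul_wilsonQuotient {p : ℕ} (hp : p.Prime) :
    ((p - 1)! : ℤ) = -1 + p * wilsonQuotient p := by
  have : Fact p.Prime := ⟨hp⟩
  have hdvd : (p : ℤ) ∣ (p - 1)! + 1 := by
    rw [← ZMod.intCast_zmod_eq_zero_iff_dvd]
    push_cast
    rw [ZMod.wilsons_lemma, neg_add_cancel]
  rw [wilsonQuotient, Int.mul_ediv_cancel' hdvd]
  ring

theorem sum_fermatQuotient_modEq_wilsonQuotient {p : ℕ} (hp : p.Prime) (hp2 : p ≠ 2) :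
    ∑ k ∈ Ico 1 p, fermatQuotient p k ≡ wilsonQuotient p [ZMOD p] := by
  have hprod : ((p - 1)! : ℤ) ^ (p - 1) ≡ 1 + p * ∑ k ∈ Ico 1 p, fermatQuotient p k
      [ZMOD p ^ 2] := by
    calc ((p - 1)! : ℤ) ^ (p - 1) = ∏ k ∈ Ico 1 p, (k : ℤ) ^ (p - 1) := by
          rw [prod_pow, ← Nat.sub_add_cancel hp.one_le, ← prod_Ico_id_eq_factorial,
            Nat.add_sub_cancel]
          push_cast; rfl
      _ = ∏ k ∈ Ico 1 p, (1 + p * fermatQuotient p k) :=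
          prod_congr rfl fun k hk =>
            pow_sub_one_eq_one_add_mul_fermatQuotient hp (hp.isCoprime_of_mem_Ico hk)
      _ ≡ _ [ZMOD p ^ 2] := Int.prod_one_add_mul_modEq_sq _ _ _
  have hpow : ((p - 1)! : ℤ) ^ (p - 1) ≡ 1 + p * wilsonQuotient p [ZMOD p ^ 2] := by
    calc ((p - 1)! : ℤ) ^ (p - 1) = ∏ _ ∈ range (p - 1), (1 + p * -wilsonQuotient p) := by
          rw [factorial_sub_one_eq_neg_one_add_mul_wilsonQuotient hp, prod_const, card_range,
            ← (hp.even_sub_one hp2).neg_pow]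
          ring_nf
      _ ≡ 1 + p * ∑ _ ∈ range (p - 1), -wilsonQuotient p [ZMOD p ^ 2] :=
          Int.prod_one_add_mul_modEq_sq _ _ _
      _ ≡ 1 + p * wilsonQuotient p [ZMOD p ^ 2] :=
          Int.modEq_iff_dvd.mpr ⟨wilsonQuotient p, by simp [Nat.cast_sub hp.one_le]; ring⟩
  have hmul := (hprod.symm.trans hpow).add_left_cancel' 1
  rw [sq] at hmul
  exact Int.ModEq.mul_left_cancel' (by exact_mod_cast hp.ne_zero) hmul

theorem factorial_sub_one_modEq_sum_pow_sub {p : ℕ} (hp : p.Prime) (hp2 : p ≠ 2) :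
    ((p - 1)! : ℤ) ≡ ∑ k ∈ range p, (k : ℤ) ^ (p - 1) - p [ZMOD p ^ 2] := by
  have hsum : ∑ k ∈ range p, (k : ℤ) ^ (p - 1) =
      p - 1 + p * ∑ k ∈ Ico 1 p, fermatQuotient p k := by
    rw [range_eq_Ico, sum_eq_sum_Ico_succ_bot hp.pos, Nat.cast_zero,
      zero_pow (by have := hp.two_le; omega), zero_add, Nat.zero_add]
    rw [sum_congr rfl fun k hk =>
      pow_sub_one_eq_one_add_mul_fermatQuotient hp (hp.isCoprime_of_mem_Ico hk)]
    simp [sum_add_distrib, mul_sum, Nat.cast_sub hp.one_le]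
  rw [factorial_sub_one_eq_neg_one_add_mul_wilsonQuotient hp, hsum, sq]
  convert ((sum_fermatQuotient_modEq_wilsonQuotient hp hp2).mul_left' (c := p)).symm.add_left (-1)
    using 1
  ring

theorem padicNorm_div_prime_le_one {p q : ℕ} [Fact p.Prime] (hq : q.Prime) :
    padicNorm p (p / q) ≤ 1 := by
  obtain rfl | hqp := eq_or_ne q p
  · rw [div_self (by exact_mod_cast hq.ne_zero), padicNorm.one]
  · have : Fact q.Prime := ⟨hq⟩
    rw [padicNorm.div, padicNorm.padicNorm_p_of_prime, padicNorm.padicNorm_of_prime_of_ne hqp.symm,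
      div_one]
    exact inv_le_one_of_one_le₀ (by exact_mod_cast (Fact.out : p.Prime).one_le)

theorem padicNorm_mul_bernoulli_le_one (p : ℕ) [Fact p.Prime] (m : ℕ) :
    padicNorm p (p * bernoulli m) ≤ 1 := by
  obtain ⟨k, rfl | rfl⟩ := m.even_or_odd'
  · obtain ⟨N, hN⟩ := Bernoulli.vonStaudt_clausen k
    have hB : (p : ℚ) * bernoulli (2 * k) = ((p * N : ℤ) : ℚ) -
        ∑ q ∈ range (2 * k + 2) with q.Prime ∧ (q - 1) ∣ 2 * k, (p / q : ℚ) := by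
      push_cast
      rw [hN, mul_add, mul_sum]
      simp_rw [mul_one_div]
      ring
    rw [hB]
    refine padicNorm.sub.trans (max_le (padicNorm.of_int _) ?_)
    exact padicNorm.sum_le' (fun q hq => padicNorm_div_prime_le_one (mem_filter.mp hq).2.1)
      zero_le_one
  · obtain rfl | hk := eq_or_ne k 0
    · rw [bernoulli_one, mul_div_assoc', mul_neg_one, neg_div, padicNorm.neg]
      exact padicNorm_div_prime_le_one Nat.prime_two
    · rw [bernoulli_eq_zero_of_odd (odd_two_mul_add_one k) (by omega), mul_zero, padicNorm.zero]
      exact zero_le_one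

theorem sum_range_pow_sub_mul_bernoulli (n m : ℕ) :
    ∑ k ∈ range n, (k : ℚ) ^ m - n * bernoulli m =
      ∑ i ∈ range m,
        bernoulli i * (m + 1).choose i * (n : ℚ) ^ (m + 1 - i) / (m + 1 : ℕ) := by
  rw [sum_range_pow, sum_range_succ, choose_succ_self_right, Nat.add_sub_cancel_left, pow_one]
  push_cast
  field_simp
  ring

theorem Nat.Prime.sq_dvd_choose_mul_pow {p i : ℕ} (hp : p.Prime) (h3 : 3 < p) (hi : i + 3 ≤ p) :
    p ^ 2 ∣ p.choose i * p ^ (p - i - 2) := by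
  obtain rfl | hi0 := eq_or_ne i 0
  · simpa using pow_dvd_pow p (by omega : 2 ≤ p - 0 - 2)
  · rw [sq]
    exact mul_dvd_mul (hp.dvd_choose_self hi0 (by omega)) (dvd_pow_self p (by omega))

theorem padicNorm_sum_range_pow_sub_mul_bernoulli_le {p : ℕ} [hp : Fact p.Prime] (h3 : 3 < p) :
    padicNorm p (∑ k ∈ range p, (k : ℚ) ^ (p - 1) - p * bernoulli (p - 1)) ≤
      p ^ (-2 : ℤ) := by
  rw [sum_range_pow_sub_mul_bernoulli, Nat.sub_add_cancel hp.out.one_le]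
  refine padicNorm.sum_le' (fun i hi => ?_) (by positivity)
  rw [mem_range] at hi
  obtain rfl | hi' := eq_or_ne i (p - 2)
  · have hodd : Odd (p - 2) :=
      Nat.Odd.sub_even (by omega) (hp.out.odd_of_ne_two (by omega)) even_two
    rw [bernoulli_eq_zero_of_odd hodd (by omega)]
    simp
  · have hterm : bernoulli i * p.choose i * (p : ℚ) ^ (p - i) / p =
        p * bernoulli i * ((p.choose i * p ^ (p - i - 2) : ℕ) : ℤ) := by
      rw [show p - i = p - i - 2 + 1 + 1 by omega]
      push_cast
      field_simp
      ring_nf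
    have hdvd := Int.natCast_dvd_natCast.mpr (hp.out.sq_dvd_choose_mul_pow (i := i) h3 (by omega))
    rw [hterm, padicNorm.mul, ← one_mul ((p : ℚ) ^ (-2 : ℤ))]
    exact mul_le_mul (padicNorm_mul_bernoulli_le_one p i) (padicNorm.dvd_iff_norm_le.mp hdvd)
      (padicNorm.nonneg _) zero_le_one

theorem padicNorm_factorial_sub_mul_bernoulli_sub_le {p : ℕ} [hp : Fact p.Prime] (h3 : 3 < p) :
    padicNorm p ((p - 1)! - (p * bernoulli (p - 1) - p)) ≤ p ^ (-2 : ℤ) := by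
  have hwilson := (factorial_sub_one_modEq_sum_pow_sub hp.out (by omega)).symm.dvd
  have hsplit : ((p - 1)! - (p * bernoulli (p - 1) - p) : ℚ) =
      (((p - 1)! - (∑ k ∈ range p, (k : ℤ) ^ (p - 1) - p) : ℤ) : ℚ) +
        (∑ k ∈ range p, (k : ℚ) ^ (p - 1) - p * bernoulli (p - 1)) := by
    push_cast
    ring
  rw [hsplit]
  exact padicNorm.nonarchimedean.trans <| max_le
    (padicNorm.dvd_iff_norm_le.mp (by exact_mod_cast hwilson))
    (padicNorm_sum_range_pow_sub_mul_bernoulli_le h3)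

theorem Padic.exists_eq_pow_mul_of_padicNorm_le {p : ℕ} [hp : Fact p.Prime] {x : ℚ} {n : ℕ}
    (hx : padicNorm p x ≤ p ^ (-n : ℤ)) : ∃ z : ℤ_[p], (x : ℚ_[p]) = p ^ n * z := by
  have hpn : (p : ℚ_[p]) ^ n ≠ 0 := pow_ne_zero _ (by exact_mod_cast hp.out.ne_zero)
  refine ⟨⟨x / p ^ n, ?_⟩, (mul_div_cancel₀ _ hpn).symm⟩
  rw [norm_div, Padic.norm_p_pow, Padic.eq_padicNorm,
    div_le_one (zpow_pos (by exact_mod_cast hp.out.pos) _), ← Rat.cast_natCast, ← Rat.cast_zpow]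
  exact_mod_cast hx

/-- Glaisher: for a prime `p > 3`, `(p-1)! ≡ p·B_{p-1} - p (mod p²)` in `ℤ_p`. -/
theorem glaisher_wilson (p : ℕ) [hp : Fact p.Prime] (h3 : 3 < p) :
    ∃ z : ℤ_[p],
      (Nat.factorial (p - 1) : ℚ_[p]) -
        ((p : ℚ_[p]) * ((bernoulli (p - 1) : ℚ) : ℚ_[p]) - (p : ℚ_[p]))
      = (p : ℚ_[p]) ^ 2 * (z : ℚ_[p]) := by
  obtain ⟨z, hz⟩ :=
    Padic.exists_eq_pow_mul_of_padicNorm_le (padicNorm_factorial_sub_mul_bernoulli_sub_le h3)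
  exact ⟨z, by push_cast at hz; exact hz⟩
end

section
/- Let p be a prime with p ≡ 1 (mod 6), and write 4p = r^2 + 27 s^2 with r ≡ 1 (mod 3). Then C(2(p-1)/3, (p-1)/3) ≡ -r (mod p). -/
/-!
Let `χ` be a cubic character of `𝔽_p`, `μ` a primitive cube root of unity and `J = J(χ, χ)`.
Since `J ≡ -1 mod 3` in `ℤ[μ]`, we may write `J = a + 3bμ` with `a ≡ -1 mod 3`; as `J J̄ = p`,
the integer `J + J̄ = 2a - 3b` satisfies `4p = (2a - 3b)² + 27b²` and `2a - 3b ≡ 1 mod 3`, so it is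
the `r` of the statement, this representation being unique.

On the other hand `J + J̄ = ∑ₓ (w + w²)` with `w = χ(x(1 - x))`, and `w + w²` only records whether
`x(1 - x)` is a nonzero cube, which `𝔽_p` detects by `(x(1 - x))ᵐ = 1`, `m = (p - 1)/3`. Hence
`r ≡ ∑ₓ ((x(1 - x))ᵐ + (x(1 - x))²ᵐ) mod p`, and expanding the powers, the power sums `∑ₓ xⁱ`
over `𝔽_p` kill every term but `-C(2m, m)`.
-/

open Finset

theorem add_sq_eq_ite_of_pow_three_eq_one {R : Type*} [CommRing R] [IsDomain R] [DecidableEq R]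
    {w : R} (hw : w ^ 3 = 1) : w + w ^ 2 = if w = 1 then 2 else -1 := by
  split_ifs with h
  · rw [h]; norm_num
  · have hfac : (w - 1) * (w ^ 2 + w + 1) = 0 := by linear_combination hw
    linear_combination (mul_eq_zero.mp hfac).resolve_left (sub_ne_zero.mpr h)

theorem exists_int_add_mul_of_mem_adjoin {R : Type*} [CommRing R] {μ : R} (hμ : μ + μ ^ 2 = -1)
    {z : R} (hz : z ∈ Algebra.adjoin ℤ {μ}) : ∃ c d : ℤ, z = c + d * μ := by
  induction hz using Algebra.adjoin_induction with
  | mem x hx => exact ⟨0, 1, by rw [Set.mem_singleton_iff.mp hx]; push_cast; ring⟩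
  | algebraMap n => exact ⟨n, 0, by simp⟩
  | add x y _ _ ihx ihy =>
    obtain ⟨a, b, rfl⟩ := ihx
    obtain ⟨c, d, rfl⟩ := ihy
    exact ⟨a + c, b + d, by push_cast; ring⟩
  | mul x y _ _ ihx ihy =>
    obtain ⟨a, b, rfl⟩ := ihx
    obtain ⟨c, d, rfl⟩ := ihy
    exact ⟨a * c - b * d, a * d + b * c - b * d, by push_cast; linear_combination b * d * hμ⟩

theorem IsPrimitiveRoot.add_sq_eq_neg_one {R : Type*} [CommRing R] [IsDomain R] {μ : R}
    (hμ : IsPrimitiveRoot μ 3) : μ + μ ^ 2 = -1 := by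
  classical
  rw [add_sq_eq_ite_of_pow_three_eq_one hμ.pow_eq_one, if_neg (hμ.ne_one (by norm_num))]

theorem IsPrimitiveRoot.conj_eq_sq {μ : ℂ} (hμ : IsPrimitiveRoot μ 3) :
    (starRingEnd ℂ) μ = μ ^ 2 := by
  rw [← Complex.inv_eq_conj (Complex.norm_eq_one_of_pow_eq_one hμ.pow_eq_one (by norm_num))]
  exact inv_eq_of_mul_eq_one_right (by rw [← pow_succ', hμ.pow_eq_one])

theorem sum_mul_one_sub_pow {R : Type*} [CommRing R] [Fintype R] (n : ℕ) :
    ∑ x : R, (x * (1 - x)) ^ n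
      = ∑ k ∈ range (n + 1), (-1) ^ k * (n.choose k : R) * ∑ x : R, x ^ (n + k) := by
  simp_rw [mul_sum]
  rw [sum_comm]
  refine sum_congr rfl fun x _ ↦ ?_
  rw [show x * (1 - x) = -x ^ 2 + x by ring, add_pow]
  refine sum_congr rfl fun k hk ↦ ?_
  have hpow : x ^ (2 * k) * x ^ (n - k) = x ^ (n + k) := by
    rw [← pow_add]; congr 1; have := mem_range.mp hk; omega
  rw [neg_pow, ← pow_mul, ← hpow]
  ring

namespace FiniteField
variable {K : Type*} [Field K] [Fintype K] {m : ℕ}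

theorem sum_pow_eq (i : ℕ) :
    ∑ x : K, x ^ i = 0 ^ i + if Fintype.card K - 1 ∣ i then -1 else 0 := by
  classical
  rw [← sum_pow_units, Fintype.sum_eq_add_sum_compl 0]
  congr 1
  exact sum_bij' (fun x hx ↦ Units.mk0 x (by simpa using hx)) (fun u _ ↦ u)
    (by simp) (by simp) (by simp) (by simp) (by simp)

theorem sum_mul_one_sub_pow_eq_zero (hK : Fintype.card K = 3 * m + 1) :
    ∑ x : K, (x * (1 - x)) ^ m = 0 := by
  have hm : 0 < m := by have := Fintype.one_lt_card (α := K); omega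
  rw [sum_mul_one_sub_pow]
  refine sum_eq_zero fun k hk ↦ ?_
  have := mem_range.mp hk
  rw [sum_pow_lt_card_sub_one K _ (by omega), mul_zero]

theorem sum_mul_one_sub_pow_two_mul (hK : Fintype.card K = 3 * m + 1) :
    ∑ x : K, (x * (1 - x)) ^ (2 * m) = -((-1) ^ m * ((2 * m).choose m : K)) := by
  have hm : 0 < m := by have := Fintype.one_lt_card (α := K); omega
  have hq : Fintype.card K - 1 = 3 * m := by omega
  rw [sum_mul_one_sub_pow, sum_eq_single_of_mem m (by simp; omega)]
  · rw [sum_pow_eq, hq, if_pos ⟨1, by ring⟩, zero_pow (by omega)]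
    ring
  · intro k hk hkm
    have := mem_range.mp hk
    have hndvd : ¬3 * m ∣ 2 * m + k := fun hdvd ↦
      hkm (by have := Nat.eq_of_dvd_of_lt_two_mul (by omega) hdvd (by omega); omega)
    rw [sum_pow_eq, hq, if_neg hndvd, zero_pow (by omega), add_zero, mul_zero]

end FiniteField

theorem MulChar.orderOf_apply_eq {F R : Type*} [CommMonoid F] [CommRing R] {g : Fˣ}
    (hg : ∀ x, x ∈ Subgroup.zpowers g) (χ : MulChar F R) : orderOf (χ g) = orderOf χ := by
  refine orderOf_eq_orderOf_iff.mpr fun k ↦ ?_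
  rw [MulChar.eq_iff hg, MulChar.pow_apply_coe, MulChar.one_apply_coe]

theorem MulChar.apply_eq_one_iff_pow_eq_one {F R : Type*} [Field F] [Fintype F] [CommRing R]
    {χ : MulChar F R} {m : ℕ} (hm : orderOf χ * m = Fintype.card F - 1) {x : F} (hx : x ≠ 0) :
    χ x = 1 ↔ x ^ m = 1 := by
  obtain ⟨g, hg⟩ := IsCyclic.exists_generator (α := Fˣ)
  obtain ⟨k, hk : g ^ k = Units.mk0 x hx⟩ :=
    mem_powers_iff_mem_zpowers.mpr (hg (Units.mk0 x hx))
  have hgord : orderOf g = orderOf χ * m := by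
    rw [hm, orderOf_eq_card_of_forall_mem_zpowers hg, Nat.card_units, Nat.card_eq_fintype_card]
  have hm0 : 0 < m := Nat.pos_of_mul_pos_left (hgord ▸ _root_.orderOf_pos g)
  have hx : x = (g : F) ^ k := by rw [← Units.val_pow_eq_pow_val, hk, Units.val_mk0]
  rw [hx, map_pow, ← orderOf_dvd_iff_pow_eq_one, MulChar.orderOf_apply_eq hg, ← pow_mul,
    ← Units.val_pow_eq_pow_val, Units.val_eq_one, ← orderOf_dvd_iff_pow_eq_one, hgord]
  exact (Nat.mul_dvd_mul_iff_right hm0).symm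

section CubicSymbolTrace
variable {F : Type*} [Field F] [Fintype F] [DecidableEq F] {m : ℕ}

/-- The trace `w + w²` of the cubic residue symbol `w` of `x` when `#F = 3m + 1`: `2` on nonzero
cubes, `-1` on non-cubes and `0` at `0`. -/
def cubicSymbolTrace (m : ℕ) (x : F) : ℤ :=
  if x = 0 then 0 else if x ^ m = 1 then 2 else -1

theorem pow_add_pow_two_mul_eq_cubicSymbolTrace (hF : Fintype.card F = 3 * m + 1) (x : F) :
    x ^ m + x ^ (2 * m) = cubicSymbolTrace m x := by
  have hm : 0 < m := by have := Fintype.one_lt_card (α := F); omega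
  by_cases hx : x = 0
  · simp [cubicSymbolTrace, hx, hm.ne']
  have hcube : (x ^ m) ^ 3 = 1 := by
    rw [← pow_mul, mul_comm, ← FiniteField.pow_card_sub_one_eq_one x hx, hF]; rfl
  rw [mul_comm, pow_mul, add_sq_eq_ite_of_pow_three_eq_one hcube, cubicSymbolTrace, if_neg hx]
  split_ifs <;> simp

theorem MulChar.apply_add_sq_eq_cubicSymbolTrace {R : Type*} [CommRing R] [IsDomain R]
    [DecidableEq R] {χ : MulChar F R} (hχ : orderOf χ = 3) (hF : Fintype.card F = 3 * m + 1)
    (x : F) : χ x + χ x ^ 2 = cubicSymbolTrace m x := by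
  by_cases hx : x = 0
  · simp [cubicSymbolTrace, hx]
  have hcube : χ x ^ 3 = 1 := by
    rw [← MulChar.pow_apply' χ three_ne_zero, ← hχ, pow_orderOf_eq_one,
      MulChar.one_apply (Ne.isUnit hx)]
  have hker : χ x = 1 ↔ x ^ m = 1 :=
    MulChar.apply_eq_one_iff_pow_eq_one (by rw [hχ, hF]; omega) hx
  rw [add_sq_eq_ite_of_pow_three_eq_one hcube, cubicSymbolTrace, if_neg hx]
  simp only [hker]
  split_ifs <;> simp

end CubicSymbolTrace

section JacobiSum
variable {F : Type*} [Field F] [Fintype F]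

theorem exists_jacobiSum_eq_of_orderOf_eq_three {R : Type*} [CommRing R] [IsDomain R]
    {χ : MulChar F R} (hχ : orderOf χ = 3) {μ : R} (hμ : IsPrimitiveRoot μ 3) :
    ∃ a b : ℤ, a ≡ -1 [ZMOD 3] ∧ jacobiSum χ χ = a + 3 * b * μ := by
  have hχ3 : χ ^ 3 = 1 := hχ ▸ pow_orderOf_eq_one χ
  obtain ⟨z, hz, hJ⟩ := exists_jacobiSum_eq_neg_one_add (by norm_num) hχ3 hχ3
    (hχ ▸ MulChar.orderOf_dvd_card_sub_one F χ) hμ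
  obtain ⟨c, d, rfl⟩ := exists_int_add_mul_of_mem_adjoin hμ.add_sq_eq_neg_one hz
  refine ⟨3 * d - 1, d - c, Int.modEq_iff_dvd.mpr ⟨-d, by ring⟩, ?_⟩
  rw [hJ]
  push_cast
  linear_combination (c + d * (μ - 3)) * hμ.add_sq_eq_neg_one

theorem exists_jacobiSum_add_jacobiSum_inv_eq {χ : MulChar F ℂ} (hχ : orderOf χ = 3) :
    ∃ r s : ℤ, r ≡ 1 [ZMOD 3] ∧ 4 * (Fintype.card F : ℤ) = r ^ 2 + 27 * s ^ 2 ∧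
      jacobiSum χ χ + jacobiSum χ⁻¹ χ⁻¹ = r := by
  obtain ⟨μ, hμ⟩ : ∃ μ : ℂ, IsPrimitiveRoot μ 3 := ⟨_, Complex.isPrimitiveRoot_exp 3 (by norm_num)⟩
  obtain ⟨a, b, ha, hJ⟩ := exists_jacobiSum_eq_of_orderOf_eq_three hχ hμ
  have hJ' : jacobiSum χ⁻¹ χ⁻¹ = a + 3 * b * μ ^ 2 := by
    rw [← MulChar.star_eq_inv]
    change jacobiSum (χ.ringHomComp (starRingEnd ℂ)) (χ.ringHomComp (starRingEnd ℂ)) = _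
    simp [jacobiSum_ringHomComp, hJ, hμ.conj_eq_sq, map_ofNat]
  have hnorm : jacobiSum χ χ * jacobiSum χ⁻¹ χ⁻¹ = Fintype.card F := by
    refine jacobiSum_mul_jacobiSum_inv ?_ ?_ ?_ ?_
    · rw [ringChar.eq_zero]; exact (CharP.ringChar_ne_zero_of_finite F).symm
    · exact pow_one χ ▸ pow_ne_one_of_lt_orderOf one_ne_zero (by omega)
    · exact pow_one χ ▸ pow_ne_one_of_lt_orderOf one_ne_zero (by omega)
    · exact sq χ ▸ pow_ne_one_of_lt_orderOf two_ne_zero (by omega)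
  refine ⟨2 * a - 3 * b, b, ?_, ?_, ?_⟩
  · unfold Int.ModEq at ha ⊢
    omega
  · rw [hJ, hJ'] at hnorm
    have h : ((4 * Fintype.card F : ℤ) : ℂ) = (((2 * a - 3 * b) ^ 2 + 27 * b ^ 2 : ℤ) : ℂ) := by
      push_cast
      linear_combination -4 * hnorm + 12 * a * b * hμ.add_sq_eq_neg_one + 36 * b ^ 2 * hμ.pow_eq_one
    exact_mod_cast h
  · rw [hJ, hJ']
    push_cast
    linear_combination 3 * b * hμ.add_sq_eq_neg_one

theorem jacobiSum_add_jacobiSum_inv_eq_sum_cubicSymbolTrace [DecidableEq F] {R : Type*}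
    [CommRing R] [IsDomain R] [DecidableEq R] {χ : MulChar F R} (hχ : orderOf χ = 3) {m : ℕ}
    (hF : Fintype.card F = 3 * m + 1) :
    jacobiSum χ χ + jacobiSum χ⁻¹ χ⁻¹ = ∑ x : F, (cubicSymbolTrace m (x * (1 - x)) : R) := by
  have hχ3 : χ ^ 3 = 1 := hχ ▸ pow_orderOf_eq_one χ
  have hinv : χ⁻¹ = χ ^ 2 := inv_eq_of_mul_eq_one_right (by rw [← pow_succ']; exact hχ3)
  rw [jacobiSum, jacobiSum, ← sum_add_distrib]
  refine sum_congr rfl fun x _ ↦ ?_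
  rw [hinv, MulChar.pow_apply' χ two_ne_zero, MulChar.pow_apply' χ two_ne_zero, ← mul_pow,
    ← map_mul, MulChar.apply_add_sq_eq_cubicSymbolTrace hχ hF]

theorem sum_cubicSymbolTrace_mul_one_sub [DecidableEq F] {m : ℕ}
    (hF : Fintype.card F = 3 * m + 1) :
    ∑ x : F, (cubicSymbolTrace m (x * (1 - x)) : F) = -((-1) ^ m * ((2 * m).choose m : F)) := by
  simp only [← pow_add_pow_two_mul_eq_cubicSymbolTrace hF, sum_add_distrib,
    FiniteField.sum_mul_one_sub_pow_eq_zero hF, FiniteField.sum_mul_one_sub_pow_two_mul hF,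
    zero_add]

theorem intCast_eq_neg_choose_of_jacobiSum_add_jacobiSum_inv_eq [DecidableEq F]
    {χ : MulChar F ℂ} (hχ : orderOf χ = 3) {m : ℕ} (hF : Fintype.card F = 3 * m + 1) {r : ℤ}
    (hr : jacobiSum χ χ + jacobiSum χ⁻¹ χ⁻¹ = r) :
    (r : F) = -((-1) ^ m * ((2 * m).choose m : F)) := by
  have hsum : r = ∑ x : F, cubicSymbolTrace m (x * (1 - x)) := by
    apply Int.cast_injective (α := ℂ)
    rw [← hr, jacobiSum_add_jacobiSum_inv_eq_sum_cubicSymbolTrace hχ hF]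
    push_cast
    rfl
  rw [hsum]
  push_cast
  exact sum_cubicSymbolTrace_mul_one_sub hF

end JacobiSum

section Representation
variable {p : ℕ} {r s L M : ℤ}

theorem eq_or_eq_neg_of_sq_add_twentySeven_mul_sq_of_dvd
    (h₁ : 4 * (p : ℤ) = r ^ 2 + 27 * s ^ 2) (h₂ : 4 * (p : ℤ) = L ^ 2 + 27 * M ^ 2)
    (hp : 0 < p) (hdvd : (p : ℤ) ∣ r * M - L * s) : r = L ∨ r = -L := by
  obtain ⟨k, hk⟩ := hdvd
  have hprod : (r * L + 27 * s * M) ^ 2 + 27 * (p * k) ^ 2 = (4 * p) ^ 2 := by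
    rw [← hk]; linear_combination (-(L ^ 2 + 27 * M ^ 2)) * h₁ - 4 * (p : ℤ) * h₂
  have hk0 : k = 0 := by
    by_contra hk0
    have hk1 : 1 ≤ k ^ 2 := by nlinarith [Int.one_le_abs hk0, sq_abs k]
    nlinarith [sq_nonneg (r * L + 27 * s * M), mul_le_mul_of_nonneg_left hk1 (sq_nonneg (p : ℤ))]
  rw [hk0, mul_zero] at hk hprod
  have hsq : (r * L + 27 * s * M) ^ 2 = (4 * p) ^ 2 := by linear_combination hprod
  have hL : 4 * p * L = r * (r * L + 27 * s * M) := by linear_combination L * h₁ - 27 * s * hk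
  have h4p : (4 * p : ℤ) ≠ 0 := by positivity
  rcases sq_eq_sq_iff_eq_or_eq_neg.mp hsq with h | h
  · exact .inl (mul_left_cancel₀ h4p (by rw [hL, h]; ring)).symm
  · have hLr : L = -r := mul_left_cancel₀ h4p (by rw [hL, h]; ring)
    exact .inr (by rw [hLr, neg_neg])

theorem eq_of_sq_add_twentySeven_mul_sq (hp : p.Prime)
    (h₁ : 4 * (p : ℤ) = r ^ 2 + 27 * s ^ 2) (h₂ : 4 * (p : ℤ) = L ^ 2 + 27 * M ^ 2)
    (hr : r ≡ 1 [ZMOD 3]) (hL : L ≡ 1 [ZMOD 3]) : r = L := by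
  have hdvd : (p : ℤ) ∣ (r * M - L * s) * (r * M - L * -s) :=
    ⟨4 * (M ^ 2 - s ^ 2), by linear_combination (-(M ^ 2)) * h₁ + s ^ 2 * h₂⟩
  have hsign : r = L ∨ r = -L := by
    rcases (Nat.prime_iff_prime_int.mp hp).dvd_mul.mp hdvd with h | h
    · exact eq_or_eq_neg_of_sq_add_twentySeven_mul_sq_of_dvd h₁ h₂ hp.pos h
    · exact eq_or_eq_neg_of_sq_add_twentySeven_mul_sq_of_dvd (s := -s) (by rw [h₁]; ring) h₂
        hp.pos h
  unfold Int.ModEq at hr hL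
  omega

end Representation

/-- Jacobi (1837): for a prime `p ≡ 1 (mod 6)` with `4p = r² + 27s²`, `r ≡ 1 (mod 3)`,
`C(2(p-1)/3, (p-1)/3) ≡ -r (mod p)`. -/
theorem jacobi_congruence (p : ℕ) (hp : p.Prime) (hp6 : p % 6 = 1)
    (r s : ℤ) (hrs : 4 * (p : ℤ) = r ^ 2 + 27 * s ^ 2) (hr : r ≡ 1 [ZMOD 3]) :
    ((Nat.choose (2 * (p - 1) / 3) ((p - 1) / 3) : ℤ)) ≡ -r [ZMOD p] := by
  have := Fact.mk hp
  obtain ⟨k, hk⟩ : ∃ k, p = 6 * k + 1 := ⟨p / 6, by omega⟩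
  have hF : Fintype.card (ZMod p) = 3 * (2 * k) + 1 := by rw [ZMod.card]; omega
  obtain ⟨χ, hχ⟩ := MulChar.exists_mulChar_orderOf (ZMod p) (n := 3)
    (by rw [ZMod.card]; omega) (Complex.isPrimitiveRoot_exp 3 (by norm_num))
  obtain ⟨L, M, hL, hLM, hJ⟩ := exists_jacobiSum_add_jacobiSum_inv_eq hχ
  have hrL : r = L := eq_of_sq_add_twentySeven_mul_sq hp hrs (by rwa [ZMod.card] at hLM) hr hL
  have hcong := intCast_eq_neg_choose_of_jacobiSum_add_jacobiSum_inv_eq hχ hF hJ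
  rw [show 2 * (p - 1) / 3 = 2 * (2 * k) by omega, show (p - 1) / 3 = 2 * k by omega,
    ← ZMod.intCast_eq_intCast_iff, hrL, Int.cast_neg, hcong, Even.neg_one_pow ⟨k, by ring⟩]
  push_cast
  ring
end

section
/- For every prime p ≥ 5, the sum of reciprocals ∑_{k=1}^{p-1} 1/k ≡ 0 (mod p^2), i.e. the numerator of the harmonic number H_{p-1} (in lowest terms) is divisible by p^2. -/
/-!
Pairing `k` with `p - k` gives `2 H = p S` with `S = ∑ 1 / (k (p - k))`. Modulo `p` each term
of `S` is `-1 / k²`, and `∑ 1 / k² ≡ ∑_{x ∈ 𝔽_p} x² ≡ 0` because inversion permutes `𝔽_p` and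
`p - 1 ∤ 2` for `p ≥ 5`. Hence `p ∣ S` in `ℤ_p`, and as `2` is a unit there, `p² ∣ H`.
-/

open Finset

theorem map_ringInverse {F M₀ G₀ : Type*} [MonoidWithZero M₀] [GroupWithZero G₀]
    [FunLike F M₀ G₀] [MonoidHomClass F M₀ G₀] (f : F) {x : M₀} (hx : IsUnit x) :
    f (Ring.inverse x) = (f x)⁻¹ := by
  obtain ⟨u, rfl⟩ := hx
  rw [Ring.inverse_unit, map_units_inv]

theorem ZMod.sum_Icc_natCast_eq_sum_univ {M : Type*} [AddCommMonoid M] (n : ℕ) [NeZero n]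
    {f : ZMod n → M} (hf : f 0 = 0) : ∑ k ∈ Icc 1 (n - 1), f k = ∑ x, f x := by
  rw [← sum_erase univ hf]
  refine sum_nbij' Nat.cast val (fun k hk => ?_) (fun x hx => ?_) (fun k hk => ?_)
    (fun x _ => natCast_zmod_val x) (fun _ _ => rfl)
  · rw [mem_Icc] at hk
    rw [mem_erase, Ne, natCast_eq_zero_iff]
    exact ⟨Nat.not_dvd_of_pos_of_lt hk.1 (by omega), mem_univ _⟩
  · have := val_lt x
    have := val_pos.2 (ne_of_mem_erase hx)
    rw [mem_Icc]
    omega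
  · rw [mem_Icc] at hk
    exact val_cast_of_lt (by omega)

theorem ZMod.sum_Icc_inv_sq_eq_zero (p : ℕ) [Fact p.Prime] (h5 : 5 ≤ p) :
    ∑ k ∈ Icc 1 (p - 1), ((k : ZMod p)⁻¹) ^ 2 = 0 :=
  calc ∑ k ∈ Icc 1 (p - 1), ((k : ZMod p)⁻¹) ^ 2
      = ∑ x : ZMod p, x⁻¹ ^ 2 := sum_Icc_natCast_eq_sum_univ p (f := fun x => x⁻¹ ^ 2) (by simp)
    _ = ∑ x : ZMod p, x ^ 2 := Equiv.sum_comp (Equiv.inv (ZMod p)) (· ^ 2)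
    _ = 0 := FiniteField.sum_pow_lt_card_sub_one _ _ (by rw [card]; omega)

theorem two_mul_sum_Icc_inv {K : Type*} [Field K] [CharZero K] (n : ℕ) :
    2 * ∑ k ∈ Icc 1 (n - 1), (k : K)⁻¹ =
      n * ∑ k ∈ Icc 1 (n - 1), (k : K)⁻¹ * ((n - k : ℕ) : K)⁻¹ := by
  have mem : ∀ k ∈ Icc 1 (n - 1), n - k ∈ Icc 1 (n - 1) := by
    intro k hk
    rw [mem_Icc] at hk ⊢
    omega
  have sub_sub : ∀ k ∈ Icc 1 (n - 1), n - (n - k) = k := by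
    intro k hk
    rw [mem_Icc] at hk
    omega
  have reflect : ∑ k ∈ Icc 1 (n - 1), (k : K)⁻¹ = ∑ k ∈ Icc 1 (n - 1), ((n - k : ℕ) : K)⁻¹ :=
    sum_nbij' (n - ·) (n - ·) mem mem sub_sub sub_sub fun k hk => by rw [sub_sub k hk]
  rw [two_mul]
  nth_rw 2 [reflect]
  rw [← sum_add_distrib, mul_sum]
  refine sum_congr rfl fun k hk => ?_
  rw [mem_Icc] at hk
  have hk0 : (k : K) ≠ 0 := Nat.cast_ne_zero.2 (by omega)
  have hnk : ((n - k : ℕ) : K) ≠ 0 := Nat.cast_ne_zero.2 (by omega)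
  field_simp
  rw [Nat.cast_sub (by omega)]
  ring

namespace PadicInt

variable {p : ℕ} [Fact p.Prime]

theorem isUnit_natCast_iff {k : ℕ} : IsUnit (k : ℤ_[p]) ↔ ¬p ∣ k := by
  rw [isUnit_iff, norm_natCast_eq_one_iff, Nat.Prime.coprime_iff_not_dvd Fact.out]

theorem coe_ringInverse {x : ℤ_[p]} (hx : IsUnit x) :
    ((Ring.inverse x : ℤ_[p]) : ℚ_[p]) = (x : ℚ_[p])⁻¹ :=
  map_ringInverse Coe.ringHom hx

theorem exists_sum_Icc_inv_mul_inv_sub_eq_p_mul (h5 : 5 ≤ p) :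
    ∃ w : ℤ_[p], ∑ k ∈ Icc 1 (p - 1), (k : ℚ_[p])⁻¹ * ((p - k : ℕ) : ℚ_[p])⁻¹ = p * w := by
  have unit : ∀ k ∈ Icc 1 (p - 1), IsUnit (k : ℤ_[p]) := fun k hk => by
    rw [mem_Icc] at hk
    exact isUnit_natCast_iff.2 (Nat.not_dvd_of_pos_of_lt (by omega) (by omega))
  have unit_sub : ∀ k ∈ Icc 1 (p - 1), IsUnit ((p - k : ℕ) : ℤ_[p]) := fun k hk =>
    unit (p - k) (by rw [mem_Icc] at hk ⊢; omega)
  set t := ∑ k ∈ Icc 1 (p - 1), Ring.inverse (k : ℤ_[p]) * Ring.inverse ((p - k : ℕ) : ℤ_[p])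
  have coe_t : (t : ℚ_[p]) = ∑ k ∈ Icc 1 (p - 1), (k : ℚ_[p])⁻¹ * ((p - k : ℕ) : ℚ_[p])⁻¹ := by
    rw [coe_sum]
    refine sum_congr rfl fun k hk => ?_
    rw [coe_mul, coe_ringInverse (unit k hk), coe_ringInverse (unit_sub k hk), coe_natCast,
      coe_natCast]
  have toZMod_t : toZMod t = 0 :=
    calc toZMod t = ∑ k ∈ Icc 1 (p - 1), -((k : ZMod p)⁻¹ ^ 2) := by
          rw [map_sum]
          refine sum_congr rfl fun k hk => ?_
          rw [map_mul, map_ringInverse _ (unit k hk), map_ringInverse _ (unit_sub k hk),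
            map_natCast, map_natCast, Nat.cast_sub ((mem_Icc.1 hk).2.trans (Nat.sub_le p 1)),
            ZMod.natCast_self, zero_sub, inv_neg]
          ring
      _ = 0 := by rw [sum_neg_distrib, ZMod.sum_Icc_inv_sq_eq_zero p h5, neg_zero]
  obtain ⟨w, hw⟩ : (p : ℤ_[p]) ∣ t := by
    rw [← Ideal.mem_span_singleton, ← maximalIdeal_eq_span_p, ← ker_toZMod]
    exact toZMod_t
  exact ⟨w, by rw [← coe_t, hw, coe_mul, coe_natCast]⟩

end PadicInt

/-- Wolstenholme (1852): for a prime `p ≥ 5`, `∑_{k=1}^{p-1} 1/k ≡ 0 (mod p²)` in `ℤ_p`. -/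
theorem wolstenholme_harmonic (p : ℕ) [hp : Fact p.Prime] (h5 : 5 ≤ p) :
    ∃ z : ℤ_[p],
      (∑ k ∈ Finset.Icc 1 (p - 1), (1 : ℚ_[p]) / (k : ℚ_[p]))
      = (p : ℚ_[p]) ^ 2 * (z : ℚ_[p]) := by
  obtain ⟨w, hw⟩ := PadicInt.exists_sum_Icc_inv_mul_inv_sub_eq_p_mul h5
  have two : IsUnit ((2 : ℕ) : ℤ_[p]) :=
    PadicInt.isUnit_natCast_iff.2 (Nat.not_dvd_of_pos_of_lt two_pos (by omega))
  refine ⟨w * Ring.inverse ((2 : ℕ) : ℤ_[p]), ?_⟩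
  have pairing := two_mul_sum_Icc_inv (K := ℚ_[p]) p
  rw [hw] at pairing
  rw [PadicInt.coe_mul, PadicInt.coe_ringInverse two, PadicInt.coe_natCast]
  simp only [one_div]
  linear_combination pairing / 2
end

section
/- For every prime p ≥ 5, the central-type binomial coefficient C(2p-1, p-1) ≡ 1 (mod p^3). -/
/-!
By Vandermonde, `C(2p, p) = ∑ C(p, i)² = 2 + p² ∑_{0<i<p} (C(p, i) / p)²`. Modulo `p` each quotient
`C(p, i) / p` is `±i⁻¹`, so the inner sum is `∑_{x ∈ 𝔽_p} x⁻² = ∑_{x ∈ 𝔽_p} x² = 0` as soon as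
`2 < p - 1`. Hence `C(2p, p) ≡ 2 (mod p³)`, and `C(2p, p) = 2 C(2p - 1, p - 1)` with `p` odd.
-/

open Finset

theorem Nat.Prime.cast_choose_sub_one {p : ℕ} (hp : p.Prime) {k : ℕ} (hk : k < p) :
    ((p - 1).choose k : ZMod p) = (-1) ^ k := by
  obtain ⟨q, rfl⟩ : ∃ q, p = q + 1 := ⟨p - 1, by have := hp.pos; omega⟩
  rw [Nat.add_sub_cancel]
  induction k with
  | zero => simp
  | succ k ih =>
    have hpascal : (q.choose k : ZMod (q + 1)) + q.choose (k + 1) = 0 := by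
      rw [← Nat.cast_add, ← Nat.choose_succ_succ, ZMod.natCast_eq_zero_iff]
      exact hp.dvd_choose_self k.succ_ne_zero hk
    rw [ih (by omega)] at hpascal
    linear_combination hpascal

theorem Nat.Prime.cast_choose_div_self_mul {p i : ℕ} (hp : p.Prime) (hi : 0 < i) (hip : i < p) :
    ((p.choose i / p : ℕ) : ZMod p) * i = (-1) ^ (i - 1) := by
  have hdiv : p * (p.choose i / p) = p.choose i :=
    Nat.mul_div_cancel' (hp.dvd_choose_self hi.ne' hip)
  have hid : (p - 1).choose (i - 1) = p.choose i / p * i := by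
    apply Nat.eq_of_mul_eq_mul_left hp.pos
    have := Nat.add_one_mul_choose_eq (p - 1) (i - 1)
    rw [Nat.sub_add_cancel hp.pos, Nat.sub_add_cancel hi] at this
    rw [this, ← Nat.mul_assoc, hdiv]
  rw [← hp.cast_choose_sub_one (k := i - 1) (by omega), hid, Nat.cast_mul]

theorem FiniteField.sum_inv_pow_eq_zero {K : Type*} [Field K] [Fintype K] {i : ℕ}
    (hi : i < Fintype.card K - 1) : ∑ x : K, x⁻¹ ^ i = 0 :=
  (Equiv.sum_comp (Equiv.inv K) (· ^ i)).trans (FiniteField.sum_pow_lt_card_sub_one K i hi)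

theorem ZMod.sum_range_natCast {M : Type*} [AddCommMonoid M] (n : ℕ) [NeZero n]
    (f : ZMod n → M) : ∑ i ∈ range n, f i = ∑ x : ZMod n, f x :=
  sum_nbij' (↑) ZMod.val (fun _ _ ↦ mem_univ _) (fun x _ ↦ mem_range.2 x.val_lt)
    (fun _ hi ↦ ZMod.val_cast_of_lt (mem_range.1 hi)) (fun x _ ↦ ZMod.natCast_zmod_val x)
    (fun _ _ ↦ rfl)

theorem Nat.Prime.dvd_sum_sq_choose_div_self {p : ℕ} (hp : p.Prime) (h5 : 5 ≤ p) :
    p ∣ ∑ i ∈ Ico 1 p, (p.choose i / p) ^ 2 := by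
  have := Fact.mk hp
  rw [← ZMod.natCast_eq_zero_iff, Nat.cast_sum]
  have hsq : ∀ i ∈ Ico 1 p, (((p.choose i / p) ^ 2 : ℕ) : ZMod p) = (i : ZMod p)⁻¹ ^ 2 := by
    intro i hi
    rw [mem_Ico] at hi
    have hi0 : (i : ZMod p) ≠ 0 := by
      rw [Ne, ZMod.natCast_eq_zero_iff]
      exact fun h ↦ absurd (Nat.le_of_dvd (by omega) h) (by omega)
    rw [Nat.cast_pow, eq_mul_inv_iff_mul_eq₀ hi0 |>.2 (hp.cast_choose_div_self_mul hi.1 hi.2),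
      mul_pow, ← pow_mul, pow_mul', neg_one_sq, one_pow, one_mul]
  have hzero : ∑ i ∈ Ico 1 p, (i : ZMod p)⁻¹ ^ 2 = ∑ i ∈ range p, (i : ZMod p)⁻¹ ^ 2 := by
    rw [range_eq_Ico, sum_eq_sum_Ico_succ_bot hp.pos]
    simp
  rw [sum_congr rfl hsq, hzero, ZMod.sum_range_natCast p (· ⁻¹ ^ 2)]
  exact FiniteField.sum_inv_pow_eq_zero (by rw [ZMod.card]; omega)

theorem Nat.sum_Ico_choose_sq_add_two {n : ℕ} (hn : 0 < n) :
    ∑ i ∈ Ico 1 n, n.choose i ^ 2 + 2 = centralBinom n := by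
  rw [centralBinom_eq_two_mul_choose, ← sum_range_choose_sq, sum_range_succ, range_eq_Ico,
    sum_eq_sum_Ico_succ_bot hn]
  simp only [choose_zero_right, choose_self]
  ring

theorem Nat.Prime.centralBinom_modEq_two {p : ℕ} (hp : p.Prime) (h5 : 5 ≤ p) :
    centralBinom p ≡ 2 [MOD p ^ 3] := by
  rw [← Nat.sum_Ico_choose_sq_add_two hp.pos]
  refine Nat.ModEq.add_right 2 (Nat.modEq_zero_iff_dvd.2 ?_)
  obtain ⟨c, hc⟩ := hp.dvd_sum_sq_choose_div_self h5
  refine ⟨c, ?_⟩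
  rw [pow_succ, mul_assoc, ← hc, mul_sum]
  refine sum_congr rfl fun i hi ↦ ?_
  rw [mem_Ico] at hi
  rw [← mul_pow, Nat.mul_div_cancel' (hp.dvd_choose_self (by omega) hi.2)]

theorem Nat.centralBinom_eq_two_mul_choose_sub_one {n : ℕ} (hn : 0 < n) :
    centralBinom n = 2 * (2 * n - 1).choose (n - 1) := by
  obtain ⟨m, rfl⟩ : ∃ m, n = m + 1 := ⟨n - 1, by omega⟩
  rw [centralBinom_eq_two_mul_choose, show 2 * (m + 1) = 2 * m + 1 + 1 by ring,
    choose_succ_succ, choose_symm_half]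
  simp only [Nat.add_sub_cancel]
  ring

/-- Wolstenholme, binomial form: for a prime `p ≥ 5`, `C(2p-1, p-1) ≡ 1 (mod p³)`. -/
theorem wolstenholme_binomial (p : ℕ) (hp : p.Prime) (h5 : 5 ≤ p) :
    ((Nat.choose (2 * p - 1) (p - 1) : ℤ)) ≡ 1 [ZMOD (p ^ 3 : ℕ)] := by
  have h := hp.centralBinom_modEq_two h5
  rw [Nat.centralBinom_eq_two_mul_choose_sub_one hp.pos, ← mul_one 2] at h
  have hcop : (p ^ 3).gcd 2 = 1 :=
    Nat.Coprime.pow_left 3 ((Nat.coprime_primes hp Nat.prime_two).2 (by omega))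
  exact_mod_cast Int.natCast_modEq_iff.2 (h.cancel_left_of_coprime hcop)
end

section
/- For every prime p ≥ 5, C(p-1, (p-1)/2) ≡ (-1)^{(p-1)/2} · 4^{p-1} (mod p^3). -/
/-!
Write `p = 2n + 1` and work in `ZMod (p ^ 3)`. On the one hand
`C(2n, n) = (-1)^n ∏_{k ≤ n} (1 - p/k)`; on the other hand, splitting `(2n)!` into its even factors
`2k` and its odd factors `p - 2k`, `C(2n, n) = (-4)^n Q` with `Q = ∏_{k ≤ n} (1 - p/(2k))`.
As `p ^ 3 = 0`, `Q ^ 2 = ∏_{k ≤ n} (1 - p/k) + p² ∑_{k ≤ n} 1/(2k)²`, and the last sum vanishes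
mod `p` for `p ≥ 5`, since `x ↦ x⁻¹` permutes `ZMod p` and `∑ x² = 0` there.
So `(-1)^n Q² = (-4)^n Q`; `Q` is a unit, hence `Q = 4^n` and `C(2n, n) = (-1)^n 4^(2n)`.
-/

open Finset Nat

section CubeZero

variable {R ι : Type*} [CommRing R] (s : Finset ι) {ε : R}

theorem sq_mul_prod_one_sub_mul (g : ι → R) (hε : ε ^ 3 = 0) :
    ε ^ 2 * ∏ i ∈ s, (1 - ε * g i) = ε ^ 2 := by
  classical
  induction s using Finset.induction_on with
  | empty => simp
  | insert a s ha ih =>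
    rw [prod_insert ha]
    linear_combination (1 - ε * g a) * ih - g a * hε

theorem sq_prod_one_sub_mul (f : ι → R) (hε : ε ^ 3 = 0) :
    (∏ i ∈ s, (1 - ε * f i)) ^ 2
      = ∏ i ∈ s, (1 - ε * (2 * f i)) + ε ^ 2 * ∑ i ∈ s, f i ^ 2 := by
  classical
  induction s using Finset.induction_on with
  | empty => simp
  | insert a s ha ih =>
    rw [prod_insert ha, prod_insert ha, sum_insert ha]
    linear_combination (1 - ε * f a) ^ 2 * ih
      + f a ^ 2 * sq_mul_prod_one_sub_mul s (fun i => 2 * f i) hε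
      + (∑ i ∈ s, f i ^ 2) * (-2 * f a + ε * f a ^ 2) * hε

end CubeZero

section Binomial

variable {R : Type*} [CommRing R]

theorem prod_range_sub_mul_succ (x c : R) {b : ℕ → R} {k : ℕ}
    (hb : ∀ i < k, c * (i + 1) * b i = 1) :
    ∏ i ∈ range k, (x - c * (i + 1)) = (-c) ^ k * k ! * ∏ i ∈ range k, (1 - x * b i) := by
  calc ∏ i ∈ range k, (x - c * (i + 1))
      = ∏ i ∈ range k, (-c * (i + 1) * (1 - x * b i)) :=
        prod_congr rfl fun i hi => by linear_combination (-x) * hb i (mem_range.1 hi)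
    _ = (-c) ^ k * k ! * ∏ i ∈ range k, (1 - x * b i) := by
        rw [prod_mul_distrib, prod_mul_distrib, prod_const, card_range,
          ← prod_range_add_one_eq_factorial]
        push_cast
        rfl

theorem Nat.factorial_two_mul_eq_mul_prod_odd (n : ℕ) :
    (2 * n)! = 2 ^ n * n ! * ∏ i ∈ range n, (2 * i + 1) := by
  induction n with
  | zero => rfl
  | succ n ih =>
    rw [show 2 * (n + 1) = 2 * n + 1 + 1 by ring, factorial_succ, factorial_succ, ih,
      prod_range_succ, pow_succ, factorial_succ]
    ring

theorem choose_eq_neg_one_pow_mul_prod {m k : ℕ} (hkm : k ≤ m) (hk : IsUnit (k ! : R))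
    {b : ℕ → R} (hb : ∀ i < k, (i + 1) * b i = 1) :
    (m.choose k : R) = (-1) ^ k * ∏ i ∈ range k, (1 - (m + 1) * b i) := by
  apply hk.mul_left_cancel
  have hfactor : ∀ i ∈ range k, ((m - i : ℕ) : R) = (m + 1) - 1 * (i + 1) := fun i hi => by
    rw [Nat.cast_sub (by have := mem_range.1 hi; omega)]
    ring
  rw [← Nat.cast_mul, ← descFactorial_eq_factorial_mul_choose, descFactorial_eq_prod_range,
    Nat.cast_prod, prod_congr rfl hfactor,
    prod_range_sub_mul_succ _ _ fun i hi => by rw [one_mul]; exact hb i hi]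
  ring

theorem choose_two_mul_eq_neg_four_pow_mul_prod {n : ℕ} (hn : IsUnit (n ! : R)) {b : ℕ → R}
    (hb : ∀ i < n, 2 * (i + 1) * b i = 1) :
    ((2 * n).choose n : R) = (-4) ^ n * ∏ i ∈ range n, (1 - (2 * n + 1) * b i) := by
  apply (hn.mul hn).mul_left_cancel
  have hodd : ∏ i ∈ range n, (2 * (i : R) + 1)
      = ∏ i ∈ range n, ((2 * n + 1 : R) - 2 * (i + 1)) := by
    rw [← prod_range_reflect]
    refine prod_congr rfl fun i hi => ?_
    have := mem_range.1 hi
    rw [eq_sub_iff_add_eq]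
    exact_mod_cast congrArg (Nat.cast : ℕ → R)
      (show 2 * (n - 1 - i) + 1 + 2 * (i + 1) = 2 * n + 1 by omega)
  have hfact := congrArg (Nat.cast : ℕ → R) (choose_mul_factorial_mul_factorial (by omega : n ≤ 2 * n))
  rw [show 2 * n - n = n by omega, factorial_two_mul_eq_mul_prod_odd] at hfact
  push_cast at hfact
  rw [hodd, prod_range_sub_mul_succ _ _ hb] at hfact
  rw [show (-4 : R) = 2 * -2 by norm_num, mul_pow]
  linear_combination hfact

end Binomial

namespace ZMod

theorem sum_range_natCast_s13 {M : Type*} [AddCommMonoid M] (n : ℕ) [NeZero n] (f : ZMod n → M) :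
    ∑ i ∈ range n, f i = ∑ x, f x :=
  sum_nbij' (fun i => i) val (fun _ _ => mem_univ _) (fun x _ => mem_range.2 x.val_lt)
    (fun _ hi => val_cast_of_lt (mem_range.1 hi)) (fun x _ => natCast_zmod_val x)
    (fun _ _ => rfl)

theorem sum_range_eq_two_nsmul_of_even {M : Type*} [AddCommMonoid M] {n : ℕ}
    (f : ZMod (2 * n + 1) → M) (h0 : f 0 = 0) (hf : ∀ x, f (-x) = f x) :
    ∑ i ∈ range (2 * n + 1), f i = 2 • ∑ i ∈ range n, f (i + 1) := by
  have hneg : ∀ j ∈ range n, f ((n + 1 + j : ℕ)) = f ((n - 1 - j : ℕ) + 1) := fun j hj => by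
    rw [← hf, neg_eq_of_add_eq_zero_left]
    have := mem_range.1 hj
    exact_mod_cast congrArg (Nat.cast : ℕ → ZMod (2 * n + 1))
      (show (n - 1 - j + 1) + (n + 1 + j) = 2 * n + 1 by omega) |>.trans (natCast_self _)
  rw [show range (2 * n + 1) = range (n + 1 + n) by congr 1; ring, sum_range_add,
    sum_range_succ', sum_congr rfl hneg, sum_range_reflect (fun j => f ((j : ℕ) + 1)) n]
  simp [h0, two_nsmul]

theorem sum_range_inv_succ_sq_eq_zero {p n : ℕ} (hp : p.Prime) (h5 : 5 ≤ p)
    (hpn : p = 2 * n + 1) :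
    ∑ i ∈ range n, ((i + 1 : ZMod p)⁻¹) ^ 2 = 0 := by
  have := Fact.mk hp
  have htwo : (2 : ZMod p) ≠ 0 := by
    intro h
    have := Nat.le_of_dvd two_pos ((natCast_eq_zero_iff 2 p).1 (by exact_mod_cast h))
    omega
  have hfull : ∑ x : ZMod p, (x⁻¹) ^ 2 = 0 := by
    rw [inv_involutive.bijective.sum_comp (fun x : ZMod p => x ^ 2),
      FiniteField.sum_pow_lt_card_sub_one _ _ (by rw [card]; omega)]
  subst hpn
  rw [← sum_range_natCast_s13, sum_range_eq_two_nsmul_of_even (fun x => x⁻¹ ^ 2) (by simp) (by simp),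
    two_nsmul, ← two_mul] at hfull
  exact (mul_eq_zero.1 hfull).resolve_left htwo

theorem natCast_mul_inv_of_not_dvd {p k : ℕ} (hp : p.Prime) (e : ℕ) (hk : ¬ p ∣ k) :
    (k : ZMod (p ^ e)) * (k : ZMod (p ^ e))⁻¹ = 1 :=
  coe_mul_inv_eq_one k (Nat.Coprime.pow_right e (Nat.coprime_comm.1 (hp.coprime_iff_not_dvd.2 hk)))

theorem pow_mul_eq_zero_of_castHom_eq_zero {p e : ℕ} [NeZero p] {x : ZMod (p ^ (e + 1))}
    (hx : castHom (dvd_pow_self p e.succ_ne_zero) (ZMod p) x = 0) :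
    (p : ZMod (p ^ (e + 1))) ^ e * x = 0 := by
  rw [castHom_apply, cast_eq_val, natCast_eq_zero_iff] at hx
  obtain ⟨m, hm⟩ := hx
  rw [← natCast_zmod_val x, hm]
  push_cast
  rw [← mul_assoc, ← pow_succ, ← Nat.cast_pow, natCast_self, zero_mul]

theorem sq_mul_sum_inv_two_mul_succ_sq_eq_zero {p n : ℕ} (hp : p.Prime) (h5 : 5 ≤ p)
    (hpn : p = 2 * n + 1) :
    (p : ZMod (p ^ 3)) ^ 2 * ∑ i ∈ range n, ((2 * (i + 1) : ZMod (p ^ 3))⁻¹) ^ 2 = 0 := by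
  have := Fact.mk hp
  apply pow_mul_eq_zero_of_castHom_eq_zero
  set ψ := castHom (dvd_pow_self p (succ_ne_zero 2)) (ZMod p)
  have hψ : ∀ i < n, ψ ((2 * (i + 1) : ZMod (p ^ 3))⁻¹) = 2⁻¹ * (i + 1 : ZMod p)⁻¹ := by
    intro i hi
    rw [← mul_inv]
    apply eq_inv_of_mul_eq_one_right
    have h := congrArg ψ (natCast_mul_inv_of_not_dvd hp 3 (k := 2 * (i + 1))
      fun h => by have := Nat.le_of_dvd (by omega) h; omega)
    rw [map_mul, map_natCast, map_one] at h
    push_cast at h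
    exact h
  rw [map_sum, sum_congr rfl fun i hi => by rw [map_pow, hψ i (mem_range.1 hi), mul_pow],
    ← mul_sum, sum_range_inv_succ_sq_eq_zero hp h5 hpn, mul_zero]

end ZMod

/-- Morley (1895): for a prime `p ≥ 5`,
`C(p-1, (p-1)/2) ≡ (-1)^{(p-1)/2} · 4^{p-1} (mod p³)`. -/
theorem morley_congruence (p : ℕ) (hp : p.Prime) (h5 : 5 ≤ p) :
    ((Nat.choose (p - 1) ((p - 1) / 2) : ℤ)) ≡
      (-1) ^ ((p - 1) / 2) * 4 ^ (p - 1) [ZMOD (p ^ 3 : ℕ)] := by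
  obtain ⟨n, hpn⟩ := hp.odd_of_ne_two (by omega)
  rw [show (p - 1) / 2 = n by omega, show p - 1 = 2 * n by omega, ← ZMod.intCast_eq_intCast_iff]
  push_cast
  set w : ℕ → ZMod (p ^ 3) := fun i => (2 * (i + 1))⁻¹
  have hw : ∀ i < n, 2 * (i + 1) * w i = 1 := fun i hi => by
    have h := ZMod.natCast_mul_inv_of_not_dvd hp 3 (k := 2 * (i + 1))
      fun h => by have := Nat.le_of_dvd (by omega) h; omega
    push_cast at h
    exact h
  have hfac : IsUnit (n ! : ZMod (p ^ 3)) :=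
    IsUnit.of_mul_eq_one _ (ZMod.natCast_mul_inv_of_not_dvd hp 3 (by rw [hp.dvd_factorial]; omega))
  have hp3 : (p : ZMod (p ^ 3)) ^ 3 = 0 := by rw [← Nat.cast_pow, ZMod.natCast_self]
  have hp' : (2 * n + 1 : ZMod (p ^ 3)) = p := by rw [hpn]; push_cast; ring
  set Q := ∏ i ∈ range n, (1 - p * w i)
  have hC1 : ((2 * n).choose n : ZMod (p ^ 3)) = (-1) ^ n * Q ^ 2 := by
    rw [choose_eq_neg_one_pow_mul_prod (by omega) hfac (b := fun i => 2 * w i)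
      fun i hi => by linear_combination hw i hi, sq_prod_one_sub_mul _ _ hp3,
      ZMod.sq_mul_sum_inv_two_mul_succ_sq_eq_zero hp h5 hpn, add_zero]
    push_cast
    rw [hp']
  have hC2 : ((2 * n).choose n : ZMod (p ^ 3)) = (-1) ^ n * (4 ^ n * Q) := by
    rw [choose_two_mul_eq_neg_four_pow_mul_prod hfac hw, hp', neg_pow, mul_assoc]
  have hQ : IsUnit Q := IsUnit.prod_iff.2 fun i _ =>
    IsNilpotent.isUnit_one_sub ⟨3, by rw [mul_pow, hp3, zero_mul]⟩
  have hQsq : Q ^ 2 = 4 ^ n * Q := (isUnit_neg_one.pow n).mul_left_cancel (hC1.symm.trans hC2)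
  have hQ4 : Q = 4 ^ n := hQ.mul_left_cancel (by linear_combination hQsq)
  rw [hC1, hQ4]
  ring
end

section
/- For every prime p > 3, ∑_{k=1}^{⌊p/3⌋} 1/(p - 3k) ≡ (1/2)·q_p(3) - (1/4)·p·q_p(3)^2 (mod p^2), where q_p(3) = (3^{p-1}-1)/p, as a congruence of p-adic integers. -/
/-!
Write `3k = r_k + p d_k` with `r_k = 3k mod p` for `0 < k < p`. As `k ↦ r_k` permutes `[1, p-1]`,
`3^{p-1} = ∏ (1 + p d_k / r_k)`, and expanding this product to second order gives
`2q ≡ 2s₁ + p (q² - s₂) (mod p²)` with `s₁ = ∑ d_k / r_k` and `s₂ = ∑ (d_k / r_k)²`.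
Sorting `k` by `d_k ∈ {0, 1, 2}` gives `s₁ = M + 2S` and `s₂ = M₂ + 4S₂`, where `S` is Lehmer's sum,
`S₂ = ∑ 1/(p-3k)²`, and `M`, `M₂` are the sums of `1/j`, `1/j²` over the residues `j = 3k - p`,
a set stable under `j ↦ p - j`. Pairing `j` with `p - j` gives `2M ≡ -p M₂ (mod p²)`, and
`∑_{0<j<p} 1/j² ≡ 0 (mod p)` gives `M₂ + 2S₂ ≡ 0 (mod p)`, which leaves `4S ≡ 2q - p q² (mod p²)`.
-/

open Finset

namespace IsUltrametricDist

variable {E : Type*} [SeminormedAddGroup E] [IsUltrametricDist E]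

theorem norm_add_le_of_norm_le {a b : E} {C : ℝ} (ha : ‖a‖ ≤ C) (hb : ‖b‖ ≤ C) : ‖a + b‖ ≤ C :=
  (norm_add_le_max a b).trans (max_le ha hb)

theorem norm_sub_le_of_norm_le {a b : E} {C : ℝ} (ha : ‖a‖ ≤ C) (hb : ‖b‖ ≤ C) : ‖a - b‖ ≤ C := by
  rw [sub_eq_add_neg]
  exact norm_add_le_of_norm_le ha (by rwa [norm_neg])

end IsUltrametricDist

open IsUltrametricDist in
theorem norm_two_mul_prod_one_add_sub_le {R ι : Type*} [NormedCommRing R] [NormOneClass R]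
    [IsUltrametricDist R] (s : Finset ι) (x : ι → R) {ε : ℝ} (hε₀ : 0 ≤ ε) (hε₁ : ε ≤ 1)
    (hx : ∀ i ∈ s, ‖x i‖ ≤ ε) :
    ‖2 * (∏ i ∈ s, (1 + x i) - 1 - ∑ i ∈ s, x i) - ((∑ i ∈ s, x i) ^ 2 - ∑ i ∈ s, x i ^ 2)‖
      ≤ ε ^ 3 := by
  induction s using Finset.cons_induction with
  | empty => simp [pow_nonneg hε₀]
  | cons a s ha ih =>
    simp only [forall_mem_cons] at hx
    obtain ⟨hxa, hxs⟩ := hx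
    have he : ‖∑ i ∈ s, x i‖ ≤ ε := norm_sum_le_of_forall_le_of_nonneg hε₀ hxs
    have hf : ‖∑ i ∈ s, x i ^ 2‖ ≤ ε ^ 2 := norm_sum_le_of_forall_le_of_nonneg (by positivity)
      fun i hi => (_root_.norm_pow_le _ 2).trans (pow_le_pow_left₀ (norm_nonneg _) (hxs i hi) 2)
    have hquad : ‖(∑ i ∈ s, x i) ^ 2 - ∑ i ∈ s, x i ^ 2‖ ≤ ε ^ 2 :=
      norm_sub_le_of_norm_le
        ((_root_.norm_pow_le _ 2).trans (pow_le_pow_left₀ (norm_nonneg _) he 2)) hf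
    rw [prod_cons, sum_cons, sum_cons]
    calc _ = ‖(1 + x a) * (2 * (∏ i ∈ s, (1 + x i) - 1 - ∑ i ∈ s, x i)
            - ((∑ i ∈ s, x i) ^ 2 - ∑ i ∈ s, x i ^ 2))
          + x a * ((∑ i ∈ s, x i) ^ 2 - ∑ i ∈ s, x i ^ 2)‖ := by congr 1; ring
      _ ≤ ε ^ 3 := by
        refine norm_add_le_of_norm_le ((norm_mul_le _ _).trans ?_) ((norm_mul_le _ _).trans ?_)
        · have h1 : ‖1 + x a‖ ≤ 1 := norm_add_le_of_norm_le norm_one.le (hxa.trans hε₁)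
          simpa using mul_le_mul h1 (ih hxs) (norm_nonneg _) zero_le_one
        · calc ‖x a‖ * ‖(∑ i ∈ s, x i) ^ 2 - ∑ i ∈ s, x i ^ 2‖ ≤ ε * ε ^ 2 :=
                mul_le_mul hxa hquad (norm_nonneg _) hε₀
            _ = ε ^ 3 := by ring

section NormedField

variable {K : Type*} [NormedField K]

theorem norm_inv_sq_sub_inv_sq {a b : K} (ha : ‖a‖ = 1) (hb : ‖b‖ = 1) :
    ‖a⁻¹ ^ 2 - b⁻¹ ^ 2‖ = ‖a - b‖ * ‖a + b‖ := by
  have ha₀ : a ≠ 0 := norm_ne_zero_iff.mp (by simp [ha])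
  have hb₀ : b ≠ 0 := norm_ne_zero_iff.mp (by simp [hb])
  have h : a⁻¹ ^ 2 - b⁻¹ ^ 2 = (b - a) * (a + b) / (a ^ 2 * b ^ 2) := by
    field_simp
    ring
  rw [h, norm_div, norm_mul, norm_mul, norm_pow, norm_pow, ha, hb, norm_sub_rev]
  simp

theorem norm_inv_add_inv_add_mul_inv_sq {a b : K} (ha : ‖a‖ = 1) (hb : ‖b‖ = 1) :
    ‖a⁻¹ + b⁻¹ + (a + b) * a⁻¹ ^ 2‖ = ‖a + b‖ ^ 2 := by
  have ha₀ : a ≠ 0 := norm_ne_zero_iff.mp (by simp [ha])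
  have hb₀ : b ≠ 0 := norm_ne_zero_iff.mp (by simp [hb])
  have h : a⁻¹ + b⁻¹ + (a + b) * a⁻¹ ^ 2 = (a + b) ^ 2 / (a ^ 2 * b) := by
    field_simp
    ring
  rw [h, norm_div, norm_mul, norm_pow, norm_pow, ha, hb]
  simp

end NormedField

namespace Nat

variable {p a : ℕ}

theorem bijOn_mul_mod_Ioc (hp : p.Prime) (ha : ¬ p ∣ a) :
    Set.BijOn (fun k => a * k % p) (Ioc 0 (p - 1)) (Ioc 0 (p - 1)) := by
  have hmaps : Set.MapsTo (fun k => a * k % p) (Ioc 0 (p - 1)) (Ioc 0 (p - 1)) := by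
    intro k hk
    simp only [coe_Ioc, Set.mem_Ioc] at hk ⊢
    have hk' : ¬ p ∣ k := Nat.not_dvd_of_pos_of_lt hk.1 (by omega)
    have hak : a * k % p ≠ 0 := fun h => (hp.dvd_mul.mp (Nat.dvd_of_mod_eq_zero h)).elim ha hk'
    have := Nat.mod_lt (a * k) hp.pos
    omega
  have hinj : Set.InjOn (fun k => a * k % p) (Ioc 0 (p - 1)) := by
    intro k hk l hl hkl
    simp only [coe_Ioc, Set.mem_Ioc] at hk hl
    exact Nat.ModEq.eq_of_lt_of_lt
      (Nat.ModEq.cancel_left_of_coprime (hp.coprime_iff_not_dvd.mpr ha) hkl) (by omega) (by omega)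
  exact ⟨hmaps, hinj, Finset.surjOn_of_injOn_of_card_le _ hmaps hinj le_rfl⟩

theorem sum_mul_mod_Ioc {M : Type*} [AddCommMonoid M] (hp : p.Prime) (ha : ¬ p ∣ a) (f : ℕ → M) :
    ∑ k ∈ Ioc 0 (p - 1), f (a * k % p) = ∑ k ∈ Ioc 0 (p - 1), f k :=
  have hbij := bijOn_mul_mod_Ioc hp ha
  sum_nbij _ (fun _ hk => hbij.mapsTo hk) hbij.injOn hbij.surjOn fun _ _ => rfl

theorem sum_Ioc_three_mul_div_mod {M : Type*} [AddCommMonoid M] {n : ℕ} (hn : ¬ 3 ∣ n)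
    (f : ℕ → ℕ → M) :
    ∑ k ∈ Ioc 0 (n - 1), f (3 * k / n) (3 * k % n) =
      ∑ k ∈ Ioc 0 (n / 3), (f 0 (3 * k) + f 2 (n - 3 * k)) +
        ∑ k ∈ Ioc (n / 3) (2 * n / 3), f 1 (3 * k - n) := by
  have h3 : n % 3 = 1 ∨ n % 3 = 2 := by rw [Nat.dvd_iff_mod_eq_zero] at hn; omega
  have hdm : ∀ x d r, x = r + n * d → r < n → x / n = d ∧ x % n = r :=
    fun _ _ _ hx hr => (Nat.div_mod_unique (by omega)).mpr ⟨hx.symm, hr⟩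
  have low : ∑ k ∈ Ioc 0 (n / 3), f (3 * k / n) (3 * k % n) = ∑ k ∈ Ioc 0 (n / 3), f 0 (3 * k) :=
    sum_congr rfl fun k hk => by
      rw [mem_Ioc] at hk
      obtain ⟨hd, hr⟩ := hdm (3 * k) 0 (3 * k) (by ring) (by omega)
      rw [hd, hr]
  have mid : ∑ k ∈ Ioc (n / 3) (2 * n / 3), f (3 * k / n) (3 * k % n) =
      ∑ k ∈ Ioc (n / 3) (2 * n / 3), f 1 (3 * k - n) :=
    sum_congr rfl fun k hk => by
      rw [mem_Ioc] at hk
      obtain ⟨hd, hr⟩ := hdm (3 * k) 1 (3 * k - n) (by omega) (by omega)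
      rw [hd, hr]
  have high : ∑ k ∈ Ioc (2 * n / 3) (n - 1), f (3 * k / n) (3 * k % n) =
      ∑ k ∈ Ioc 0 (n / 3), f 2 (n - 3 * k) := by
    refine sum_nbij' (n - ·) (n - ·) ?_ ?_ ?_ ?_ fun k hk => ?_ <;> simp only [mem_Ioc] at *
    · intro k hk; omega
    · intro k hk; omega
    · intro k hk; omega
    · intro k hk; omega
    · obtain ⟨hd, hr⟩ := hdm (3 * k) 2 (3 * k - 2 * n) (by omega) (by omega)
      rw [hd, hr, show n - 3 * (n - k) = 3 * k - 2 * n by omega]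
  rw [← sum_Ioc_consecutive _ (Nat.zero_le (2 * n / 3)) (by omega : 2 * n / 3 ≤ n - 1),
    ← sum_Ioc_consecutive _ (Nat.zero_le (n / 3)) (by omega : n / 3 ≤ 2 * n / 3),
    low, mid, high, sum_add_distrib]
  abel

end Nat

theorem pow_sub_one_eq_prod_one_add {K : Type*} [Field K] [CharZero K] {p a : ℕ} (hp : p.Prime)
    (ha : ¬ p ∣ a) :
    (a : K) ^ (p - 1) =
      ∏ k ∈ Ioc 0 (p - 1), (1 + p * ((a * k / p : ℕ) : K) / ((a * k % p : ℕ) : K)) := by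
  have hbij := Nat.bijOn_mul_mod_Ioc hp ha
  have hfact : ∏ k ∈ Ioc 0 (p - 1), (k : K) ≠ 0 :=
    prod_ne_zero_iff.mpr fun k hk => Nat.cast_ne_zero.mpr (mem_Ioc.mp hk).1.ne'
  have hperm : ∏ k ∈ Ioc 0 (p - 1), ((a * k % p : ℕ) : K) = ∏ k ∈ Ioc 0 (p - 1), (k : K) :=
    prod_nbij _ (fun _ hk => hbij.mapsTo hk) hbij.injOn hbij.surjOn fun _ _ => rfl
  have hterm : ∀ k ∈ Ioc 0 (p - 1), ((a * k : ℕ) : K) =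
      (1 + p * ((a * k / p : ℕ) : K) / ((a * k % p : ℕ) : K)) * ((a * k % p : ℕ) : K) := by
    intro k hk
    have hr : ((a * k % p : ℕ) : K) ≠ 0 :=
      Nat.cast_ne_zero.mpr (mem_Ioc.mp (hbij.mapsTo hk)).1.ne'
    rw [add_mul, one_mul, div_mul_cancel₀ _ hr]
    exact_mod_cast (Nat.mod_add_div (a * k) p).symm
  rw [← mul_left_inj' hfact, ← hperm, ← prod_mul_distrib, ← prod_congr rfl hterm]
  push_cast
  rw [prod_mul_distrib, prod_const, Nat.card_Ioc, Nat.sub_zero, hperm]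

namespace Padic

open IsUltrametricDist

variable {p : ℕ} [hp : Fact p.Prime]

theorem norm_natCast_eq_one_of_pos_of_lt {j : ℕ} (h₀ : 0 < j) (hj : j < p) :
    ‖(j : ℚ_[p])‖ = 1 :=
  norm_natCast_eq_one_iff.mpr (Nat.coprime_of_lt_prime h₀.ne' hj hp.out)

theorem norm_two_eq_one (hp₂ : p ≠ 2) : ‖(2 : ℚ_[p])‖ = 1 := by
  exact_mod_cast norm_natCast_eq_one_iff.mpr ((Nat.coprime_primes hp.out Nat.prime_two).mpr hp₂)

theorem norm_p_mul_le {x : ℚ_[p]} (hx : ‖x‖ ≤ 1) : ‖(p : ℚ_[p]) * x‖ ≤ (p : ℝ)⁻¹ := by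
  simpa [norm_p] using mul_le_mul_of_nonneg_left hx (inv_nonneg.mpr (Nat.cast_nonneg p))

theorem exists_eq_p_pow_mul_of_norm_le {x : ℚ_[p]} {n : ℕ} (hx : ‖x‖ ≤ (p : ℝ)⁻¹ ^ n) :
    ∃ z : ℤ_[p], x = (p : ℚ_[p]) ^ n * z := by
  have hp₀ : (p : ℚ_[p]) ^ n ≠ 0 := pow_ne_zero n (Nat.cast_ne_zero.mpr hp.out.ne_zero)
  refine ⟨⟨x / (p : ℚ_[p]) ^ n, ?_⟩, (mul_div_cancel₀ x hp₀).symm⟩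
  rwa [norm_div, norm_pow, norm_p, div_le_one (pow_pos (inv_pos.mpr (by exact_mod_cast hp.out.pos)) n)]

theorem norm_two_mul_sub_sub_le_of_eq_prod {ι : Type*} {s : Finset ι} {t : ι → ℚ_[p]}
    (ht : ∀ k ∈ s, ‖t k‖ ≤ 1) {q : ℚ_[p]} (hq : 1 + p * q = ∏ k ∈ s, (1 + p * t k)) :
    ‖2 * (q - ∑ k ∈ s, t k) - p * ((∑ k ∈ s, t k) ^ 2 - ∑ k ∈ s, t k ^ 2)‖ ≤ (p : ℝ)⁻¹ ^ 2 := by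
  have hε₀ : (0 : ℝ) < (p : ℝ)⁻¹ := inv_pos.mpr (by exact_mod_cast hp.out.pos)
  have hexp := norm_two_mul_prod_one_add_sub_le s (fun k => (p : ℚ_[p]) * t k) hε₀.le
    (inv_le_one_of_one_le₀ (by exact_mod_cast hp.out.one_le)) fun k hk => norm_p_mul_le (ht k hk)
  simp only [← hq, mul_pow, ← mul_sum] at hexp
  rw [show ∀ e f : ℚ_[p], 2 * (1 + p * q - 1 - p * e) - (p ^ 2 * e ^ 2 - p ^ 2 * f) =
      p * (2 * (q - e) - p * (e ^ 2 - f)) by intros; ring, norm_mul, norm_p, pow_succ' _ 2] at hexp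
  exact le_of_mul_le_mul_left hexp hε₀

theorem norm_two_mul_sub_le_of_eq_prod {ι : Type*} (hp₂ : p ≠ 2) {s : Finset ι} {t : ι → ℚ_[p]}
    (ht : ∀ k ∈ s, ‖t k‖ ≤ 1) {q : ℚ_[p]} (hq : 1 + p * q = ∏ k ∈ s, (1 + p * t k)) :
    ‖2 * q - 2 * ∑ k ∈ s, t k - p * (q ^ 2 - ∑ k ∈ s, t k ^ 2)‖ ≤ (p : ℝ)⁻¹ ^ 2 := by
  have hE := norm_two_mul_sub_sub_le_of_eq_prod ht hq
  set ε := (p : ℝ)⁻¹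
  have hε₀ : 0 ≤ ε := inv_nonneg.mpr (Nat.cast_nonneg p)
  have hε₁ : ε ≤ 1 := inv_le_one_of_one_le₀ (by exact_mod_cast hp.out.one_le)
  have h2 := norm_two_eq_one hp₂
  set e := ∑ k ∈ s, t k
  set f := ∑ k ∈ s, t k ^ 2
  have he : ‖e‖ ≤ 1 := norm_sum_le_of_forall_le_of_nonneg zero_le_one ht
  have hf : ‖f‖ ≤ 1 := norm_sum_le_of_forall_le_of_nonneg zero_le_one fun k hk => by
    rw [norm_pow]; exact pow_le_one₀ (norm_nonneg _) (ht k hk)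
  have hqe : ‖q - e‖ ≤ ε := by
    have h : ‖2 * (q - e)‖ ≤ ε := by
      rw [show 2 * (q - e) = (2 * (q - e) - p * (e ^ 2 - f)) + p * (e ^ 2 - f) by ring]
      refine norm_add_le_of_norm_le (hE.trans (by nlinarith)) (norm_p_mul_le ?_)
      exact norm_sub_le_of_norm_le (by rw [norm_pow]; exact pow_le_one₀ (norm_nonneg _) he) hf
    rwa [norm_mul, h2, one_mul] at h
  have hq1 : ‖q + e‖ ≤ 1 := by
    rw [show q + e = (q - e) + 2 * e by ring]
    exact norm_add_le_of_norm_le (hqe.trans hε₁) (by rw [norm_mul, h2, one_mul]; exact he)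
  rw [show 2 * q - 2 * e - p * (q ^ 2 - f) =
      (2 * (q - e) - p * (e ^ 2 - f)) - p * (q - e) * (q + e) by ring]
  refine norm_sub_le_of_norm_le hE ?_
  rw [norm_mul, norm_mul, norm_p, mul_assoc, sq]
  exact mul_le_mul_of_nonneg_left (by simpa using mul_le_mul hqe hq1 (norm_nonneg _) hε₀) hε₀

theorem norm_sum_inv_sq_le (hp₃ : 3 < p) :
    ‖∑ k ∈ Ioc 0 (p - 1), (k : ℚ_[p])⁻¹ ^ 2‖ ≤ (p : ℝ)⁻¹ := by
  have hunit : ∀ k ∈ Ioc 0 (p - 1), ‖(k : ℚ_[p])‖ = 1 := fun k hk =>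
    norm_natCast_eq_one_of_pos_of_lt (mem_Ioc.mp hk).1 (by have := (mem_Ioc.mp hk).2; omega)
  have h2 := norm_two_eq_one (p := p) (by omega)
  have h3 : ‖(3 : ℚ_[p])‖ = 1 := by
    simpa using norm_natCast_eq_one_of_pos_of_lt (p := p) three_pos hp₃
  have hp2 : ¬ p ∣ 2 := Nat.not_dvd_of_pos_of_lt two_pos (by omega)
  -- reindexing by `k ↦ 2k mod p`: `∑ 1/k² ≡ ∑ 1/(2k)² = (∑ 1/k²) / 4 (mod p)`
  have hterm : ∀ k ∈ Ioc 0 (p - 1),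
      ‖((2 * k % p : ℕ) : ℚ_[p])⁻¹ ^ 2 - (2 * (k : ℚ_[p]))⁻¹ ^ 2‖ ≤ (p : ℝ)⁻¹ := by
    intro k hk
    have hr := hunit _ ((Nat.bijOn_mul_mod_Ioc hp.out hp2).mapsTo hk)
    rw [norm_inv_sq_sub_inv_sq hr (by rw [norm_mul, h2, hunit k hk, one_mul])]
    have hdiv := congrArg (Nat.cast (R := ℚ_[p])) (Nat.mod_add_div (2 * k) p)
    push_cast at hdiv
    rw [show ((2 * k % p : ℕ) : ℚ_[p]) - 2 * k = p * -((2 * k / p : ℕ) : ℚ_[p]) by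
      linear_combination hdiv]
    have hd : ‖-((2 * k / p : ℕ) : ℚ_[p])‖ ≤ 1 := by
      rw [norm_neg]; exact norm_natCast_le_one _ _
    have hs : ‖((2 * k % p : ℕ) : ℚ_[p]) + 2 * k‖ ≤ 1 := norm_add_le_of_norm_le
      (norm_natCast_le_one _ _) (by exact_mod_cast norm_natCast_le_one ℚ_[p] (2 * k))
    simpa using mul_le_mul (norm_p_mul_le hd) hs (norm_nonneg _) (by positivity)
  have h := norm_sum_le_of_forall_le_of_nonneg (by positivity) hterm
  rw [sum_sub_distrib, Nat.sum_mul_mod_Ioc hp.out hp2 fun j => (j : ℚ_[p])⁻¹ ^ 2] at h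
  simp only [mul_inv, mul_pow, ← mul_sum] at h
  rw [show ∀ x : ℚ_[p], x - 2⁻¹ ^ 2 * x = 3 / 4 * x by intro x; ring, norm_mul, norm_div, h3,
    show (4 : ℚ_[p]) = 2 ^ 2 by norm_num, norm_pow, h2] at h
  simpa using h

theorem norm_two_mul_sum_inv_add_p_mul_sum_inv_sq_le (h3 : ¬ 3 ∣ p) :
    ‖2 * ∑ k ∈ Ioc (p / 3) (2 * p / 3), ((3 * k - p : ℕ) : ℚ_[p])⁻¹ +
        p * ∑ k ∈ Ioc (p / 3) (2 * p / 3), ((3 * k - p : ℕ) : ℚ_[p])⁻¹ ^ 2‖ ≤ (p : ℝ)⁻¹ ^ 2 := by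
  have hp3 : p % 3 = 1 ∨ p % 3 = 2 := by rw [Nat.dvd_iff_mod_eq_zero] at h3; omega
  -- `j = 3k - p` and `p - j` run over the same residues
  have hrefl : ∑ k ∈ Ioc (p / 3) (2 * p / 3), ((3 * k - p : ℕ) : ℚ_[p])⁻¹ =
      ∑ k ∈ Ioc (p / 3) (2 * p / 3), ((p - (3 * k - p) : ℕ) : ℚ_[p])⁻¹ := by
    refine sum_nbij' (p - ·) (p - ·) ?_ ?_ ?_ ?_ fun k hk => ?_ <;> simp only [mem_Ioc] at *
    · intro k hk; omega
    · intro k hk; omega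
    · intro k hk; omega
    · intro k hk; omega
    · rw [show p - (3 * (p - k) - p) = 3 * k - p by omega]
  rw [two_mul]
  nth_rewrite 2 [hrefl]
  rw [mul_sum, ← sum_add_distrib, ← sum_add_distrib]
  refine norm_sum_le_of_forall_le_of_nonneg (by positivity) fun k hk => ?_
  rw [mem_Ioc] at hk
  have hab : ((3 * k - p : ℕ) : ℚ_[p]) + ((p - (3 * k - p) : ℕ) : ℚ_[p]) = p := by
    rw [← Nat.cast_add, show 3 * k - p + (p - (3 * k - p)) = p by omega]
  have h := norm_inv_add_inv_add_mul_inv_sq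
    (norm_natCast_eq_one_of_pos_of_lt (p := p) (j := 3 * k - p) (by omega) (by omega))
    (norm_natCast_eq_one_of_pos_of_lt (p := p) (j := p - (3 * k - p)) (by omega) (by omega))
  rw [hab, norm_p] at h
  exact h.le

theorem norm_sum_inv_sq_add_two_mul_sum_inv_sq_le (hp₃ : 3 < p) :
    ‖∑ k ∈ Ioc (p / 3) (2 * p / 3), ((3 * k - p : ℕ) : ℚ_[p])⁻¹ ^ 2 +
        2 * ∑ k ∈ Ioc 0 (p / 3), ((p - 3 * k : ℕ) : ℚ_[p])⁻¹ ^ 2‖ ≤ (p : ℝ)⁻¹ := by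
  have h3 : ¬ 3 ∣ p := (Nat.prime_dvd_prime_iff_eq Nat.prime_three hp.out).not.mpr (by omega)
  have hsplit := Nat.sum_Ioc_three_mul_div_mod h3 fun _ r => (r : ℚ_[p])⁻¹ ^ 2
  have hperm := Nat.sum_mul_mod_Ioc hp.out (Nat.not_dvd_of_pos_of_lt three_pos hp₃)
    fun r => (r : ℚ_[p])⁻¹ ^ 2
  rw [hperm, sum_add_distrib] at hsplit
  rw [show ∑ k ∈ Ioc (p / 3) (2 * p / 3), ((3 * k - p : ℕ) : ℚ_[p])⁻¹ ^ 2 +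
      2 * ∑ k ∈ Ioc 0 (p / 3), ((p - 3 * k : ℕ) : ℚ_[p])⁻¹ ^ 2 =
      ∑ k ∈ Ioc 0 (p - 1), (k : ℚ_[p])⁻¹ ^ 2 +
        ∑ k ∈ Ioc 0 (p / 3), (((p - 3 * k : ℕ) : ℚ_[p])⁻¹ ^ 2 - ((3 * k : ℕ) : ℚ_[p])⁻¹ ^ 2) by
    rw [sum_sub_distrib, hsplit]; ring]
  refine norm_add_le_of_norm_le (norm_sum_inv_sq_le hp₃)
    (norm_sum_le_of_forall_le_of_nonneg (by positivity) fun k hk => ?_)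
  rw [mem_Ioc] at hk
  rw [norm_inv_sq_sub_inv_sq
    (norm_natCast_eq_one_of_pos_of_lt (j := p - 3 * k) (by omega) (by omega))
    (norm_natCast_eq_one_of_pos_of_lt (j := 3 * k) (by omega) (by omega)), ← Nat.cast_add,
    show p - 3 * k + 3 * k = p by omega, norm_p]
  exact mul_le_of_le_one_left (inv_nonneg.mpr (Nat.cast_nonneg p))
    (norm_sub_le_of_norm_le (norm_natCast_le_one _ _) (norm_natCast_le_one _ _))

theorem norm_sum_inv_sub_three_mul_sub_le (hp₃ : 3 < p) {q : ℚ_[p]} (hq : (3 : ℚ_[p]) ^ (p - 1) = 1 + p * q) :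
    ‖∑ k ∈ Ioc 0 (p / 3), ((p - 3 * k : ℕ) : ℚ_[p])⁻¹ - (1 / 2 * q - 1 / 4 * p * q ^ 2)‖ ≤
      (p : ℝ)⁻¹ ^ 2 := by
  have h3 : ¬ 3 ∣ p := (Nat.prime_dvd_prime_iff_eq Nat.prime_three hp.out).not.mpr (by omega)
  have hp3 : ¬ p ∣ 3 := Nat.not_dvd_of_pos_of_lt three_pos hp₃
  set t : ℕ → ℚ_[p] := fun k => ((3 * k / p : ℕ) : ℚ_[p]) / ((3 * k % p : ℕ) : ℚ_[p])
  have ht : ∀ k ∈ Ioc 0 (p - 1), ‖t k‖ ≤ 1 := fun k hk => by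
    have hr := mem_Ioc.mp ((Nat.bijOn_mul_mod_Ioc hp.out hp3).mapsTo hk)
    rw [norm_div, norm_natCast_eq_one_of_pos_of_lt hr.1 (by omega), div_one]
    exact norm_natCast_le_one _ _
  have hprod : 1 + p * q = ∏ k ∈ Ioc 0 (p - 1), (1 + p * t k) := by
    simpa [← hq, t, mul_div_assoc] using pow_sub_one_eq_prod_one_add (K := ℚ_[p]) hp.out hp3
  set S := ∑ k ∈ Ioc 0 (p / 3), ((p - 3 * k : ℕ) : ℚ_[p])⁻¹
  set S₂ := ∑ k ∈ Ioc 0 (p / 3), ((p - 3 * k : ℕ) : ℚ_[p])⁻¹ ^ 2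
  set M := ∑ k ∈ Ioc (p / 3) (2 * p / 3), ((3 * k - p : ℕ) : ℚ_[p])⁻¹
  set M₂ := ∑ k ∈ Ioc (p / 3) (2 * p / 3), ((3 * k - p : ℕ) : ℚ_[p])⁻¹ ^ 2
  have hs₁ : ∑ k ∈ Ioc 0 (p - 1), t k = M + 2 * S := by
    rw [Nat.sum_Ioc_three_mul_div_mod h3 fun d r => (d : ℚ_[p]) / r, add_comm]
    simp only [Nat.cast_zero, Nat.cast_one, Nat.cast_ofNat, div_eq_mul_inv, zero_mul, one_mul,
      zero_add, mul_sum, S, M]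
  have hs₂ : ∑ k ∈ Ioc 0 (p - 1), t k ^ 2 = M₂ + 4 * S₂ := by
    rw [Nat.sum_Ioc_three_mul_div_mod h3 fun d r => ((d : ℚ_[p]) / r) ^ 2, add_comm]
    simp only [Nat.cast_zero, Nat.cast_one, Nat.cast_ofNat, div_eq_mul_inv, zero_mul, one_mul,
      mul_pow, mul_sum, S₂, M₂]
    norm_num
  have hE₁ := norm_two_mul_sub_le_of_eq_prod (p := p) (by omega) ht hprod
  rw [hs₁, hs₂] at hE₁
  have hE₂ := norm_two_mul_sum_inv_add_p_mul_sum_inv_sq_le h3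
  have hE₃ := norm_sum_inv_sq_add_two_mul_sum_inv_sq_le hp₃
  have h4 : ‖(4 : ℚ_[p])‖ = 1 := by
    rw [show (4 : ℚ_[p]) = 2 ^ 2 by norm_num, norm_pow, norm_two_eq_one (by omega), one_pow]
  rw [← one_mul ‖_‖, ← h4, ← norm_mul]
  rw [show 4 * (S - (1 / 2 * q - 1 / 4 * p * q ^ 2)) =
      -(2 * q - 2 * (M + 2 * S) - p * (q ^ 2 - (M₂ + 4 * S₂))) - (2 * M + p * M₂) +
        2 * (p * (M₂ + 2 * S₂)) by ring]
  refine norm_add_le_of_norm_le (norm_sub_le_of_norm_le (by rwa [norm_neg]) hE₂) ?_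
  rw [norm_mul, norm_two_eq_one (by omega), one_mul, norm_mul, norm_p, sq]
  exact mul_le_mul_of_nonneg_left hE₃ (inv_nonneg.mpr (Nat.cast_nonneg p))

end Padic

/-- Lehmer (1938): for a prime `p > 3`, with `q = q_p(3) = (3^{p-1}-1)/p`,
`∑_{k=1}^{⌊p/3⌋} 1/(p-3k) ≡ ½q - ¼p·q² (mod p²)` in `ℤ_p`. -/
theorem lehmer_third (p : ℕ) [hp : Fact p.Prime] (h3 : 3 < p)
    (q : ℚ) (hq : q = ((3 ^ (p - 1) - 1 : ℚ)) / p) :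
    ∃ z : ℤ_[p],
      (∑ k ∈ Finset.Icc 1 (p / 3), (1 : ℚ_[p]) / ((p : ℚ_[p]) - 3 * (k : ℚ_[p]))) -
        ((1 / 2) * (q : ℚ_[p]) - (1 / 4) * (p : ℚ_[p]) * (q : ℚ_[p]) ^ 2)
      = (p : ℚ_[p]) ^ 2 * (z : ℚ_[p]) := by
  have hq' : (3 : ℚ_[p]) ^ (p - 1) = 1 + p * q := by
    have hp₀ : (p : ℚ) ≠ 0 := Nat.cast_ne_zero.mpr hp.out.ne_zero
    have h : (3 : ℚ) ^ (p - 1) = 1 + p * q := by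
      rw [hq]
      field_simp
      ring
    exact_mod_cast congrArg (Rat.cast (K := ℚ_[p])) h
  have hsum : ∑ k ∈ Icc 1 (p / 3), (1 : ℚ_[p]) / ((p : ℚ_[p]) - 3 * (k : ℚ_[p])) =
      ∑ k ∈ Ioc 0 (p / 3), ((p - 3 * k : ℕ) : ℚ_[p])⁻¹ := by
    refine sum_congr (by ext k; simp only [mem_Icc, mem_Ioc]; omega) fun k hk => ?_
    rw [mem_Ioc] at hk
    rw [one_div, Nat.cast_sub (by omega), Nat.cast_mul, Nat.cast_ofNat]
  rw [hsum]
  exact Padic.exists_eq_p_pow_mul_of_norm_le (Padic.norm_sum_inv_sub_three_mul_sub_le h3 hq')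
end

section
/- Let p > 3 be prime and for each i ≥ 1 set V_{p,i} = p·B_{i(p-1)}/(p-1) - 1 ∈ ℤ_p. Then V_{p,i} ≡ 0 (mod p) for all i ≥ 1; moreover 2V_{p,1} - V_{p,2} ≡ 0 (mod p^2), 3V_{p,2} - 2V_{p,3} ≡ 0 (mod p^2), and 3V_{p,1} - 3V_{p,2} + V_{p,3} ≡ 0 (mod p^3). -/
/-!
Faulhaber's formula with `n = p` gives
`p B_m = ∑_{k=1}^{p-1} k^m - ∑_{j<m} B_j C(m,j) p^(m+1-j) / (m+1-j)`.
When `p ≥ 5` and `(p - 1) ∣ m`, von Staudt–Clausen makes every term of the second sum divisible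
by `p³` (the term `j = m - 1` vanishes because `B_j = 0` for odd `j > 1`), so
`(p - 1) V_i ≡ ∑_{k=1}^{p-1} (x_k^i - 1) (mod p³)` with `x_k = k^(p-1) ≡ 1 (mod p)`.
The three combinations are then sums of `-(x-1)²`, `-(x-1)²(2x+1)` and `(x-1)³`.
-/

open Finset

lemma padicValNat_add_min_four_le {p : ℕ} (hp5 : 5 ≤ p) {s : ℕ} (hs : s ≠ 0) :
    padicValNat p s + min s 4 ≤ s := by
  set v := padicValNat p s
  have hvs : p ^ v ≤ s := Nat.le_of_dvd (Nat.pos_of_ne_zero hs) pow_padicValNat_dvd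
  rcases Nat.eq_zero_or_pos v with hv | hv
  · omega
  · have hfive_pow : 1 + v * 4 ≤ 5 ^ v := by
      exact_mod_cast one_add_mul_le_pow (by norm_num : (-2 : ℤ) ≤ 4) v
    have := Nat.pow_le_pow_left hp5 v
    omega

def faulhaberTail (n m : ℕ) : ℚ :=
  ∑ j ∈ range m, bernoulli j * m.choose j * n ^ (m + 1 - j) / (m + 1 - j : ℕ)

theorem sum_range_pow_eq_mul_bernoulli_add_faulhaberTail (n m : ℕ) :
    ∑ k ∈ range n, (k : ℚ) ^ m = n * bernoulli m + faulhaberTail n m := by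
  rw [sum_range_pow, sum_range_succ, add_comm, faulhaberTail, Nat.choose_succ_self_right,
    Nat.add_sub_cancel_left]
  congr 1
  · push_cast
    field_simp
  · refine sum_congr rfl fun j hj => ?_
    have hjm : j < m := mem_range.mp hj
    have hchoose : (m.choose j * (m + 1) : ℚ) = (m + 1).choose j * (m + 1 - j : ℕ) := by
      exact_mod_cast Nat.choose_mul_succ_eq m j
    rw [div_eq_div_iff (by positivity) (by norm_cast; omega)]
    linear_combination (-(bernoulli j * n ^ (m + 1 - j))) * hchoose

def fermatSum (p i : ℕ) : ℤ :=
  ∑ k ∈ Ico 1 p, (((k : ℤ) ^ (p - 1)) ^ i - 1)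

section

variable {p : ℕ} [hp : Fact p.Prime]

@[simp, norm_cast]
lemma PadicInt.coe_ofNat (n : ℕ) [n.AtLeastTwo] : ((ofNat(n) : ℤ_[p]) : ℚ_[p]) = ofNat(n) :=
  rfl

lemma norm_p_sub_one : ‖(p : ℚ_[p]) - 1‖ = 1 := by
  simpa [Nat.cast_sub hp.out.one_le] using Padic.norm_natCast_p_sub_one (p := p)

lemma norm_pow_div_natCast_le (hp5 : 5 ≤ p) {s : ℕ} (hs : s ≠ 0) :
    ‖(p : ℚ_[p]) ^ s / s‖ ≤ (p : ℝ) ^ (-(min s 4 : ℕ) : ℤ) := by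
  rw [norm_div, Padic.norm_p_pow, Padic.norm_eq_zpow_neg_valuation (by exact_mod_cast hs),
    Padic.valuation_natCast, ← zpow_sub₀ (by exact_mod_cast hp.out.ne_zero)]
  apply zpow_le_zpow_right₀ (by exact_mod_cast hp.out.one_le)
  have := padicValNat_add_min_four_le hp5 hs
  omega

lemma norm_inv_natCast_prime_le {q : ℕ} (hq : q.Prime) :
    ‖((q : ℚ_[p]))⁻¹‖ ≤ if q = p then (p : ℝ) else 1 := by
  rw [norm_inv]
  split_ifs with h
  · subst h
    simp [Padic.norm_p]
  · rw [(Padic.norm_natCast_eq_one_iff (p := p)).mpr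
      ((Nat.coprime_primes hp.out hq).mpr (Ne.symm h)), inv_one]

lemma norm_bernoulli_two_mul_le (k : ℕ) :
    ‖(bernoulli (2 * k) : ℚ_[p])‖ ≤ if (p - 1) ∣ 2 * k then (p : ℝ) else 1 := by
  have hone : (1 : ℝ) ≤ if (p - 1) ∣ 2 * k then (p : ℝ) else 1 := by
    split_ifs
    · exact_mod_cast hp.out.one_le
    · rfl
  obtain ⟨z, hz⟩ := Bernoulli.vonStaudt_clausen k
  have hB : (bernoulli (2 * k) : ℚ_[p]) =
      z - ∑ q ∈ range (2 * k + 2) with q.Prime ∧ (q - 1) ∣ 2 * k, ((q : ℚ_[p]))⁻¹ := by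
    have := congrArg ((↑) : ℚ → ℚ_[p]) hz
    push_cast at this
    rw [this]
    simp
  rw [hB, sub_eq_add_neg]
  refine (IsUltrametricDist.norm_add_le_max _ _).trans
    (max_le ((Padic.norm_int_le_one z).trans hone) ?_)
  rw [norm_neg]
  refine IsUltrametricDist.norm_sum_le_of_forall_le_of_nonneg (zero_le_one.trans hone)
    fun q hq => ?_
  obtain ⟨-, hq_prime, hq_dvd⟩ := mem_filter.mp hq
  refine (norm_inv_natCast_prime_le hq_prime).trans ?_
  rcases eq_or_ne q p with rfl | hne
  · simp [hq_dvd]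
  · simpa [hne] using hone

lemma norm_bernoulli_le (n : ℕ) :
    ‖(bernoulli n : ℚ_[p])‖ ≤ if n ≠ 0 ∧ (p - 1) ∣ n then (p : ℝ) else 1 := by
  obtain ⟨k, rfl | rfl⟩ := Nat.even_or_odd' n
  · rcases eq_or_ne k 0 with rfl | hk
    · simp
    · simpa [hk] using norm_bernoulli_two_mul_le (p := p) k
  · rcases eq_or_ne k 0 with rfl | hk
    · -- `B₁ = -1/2`
      have h2 := norm_inv_natCast_prime_le (p := p) Nat.prime_two
      rcases eq_or_ne 2 p with rfl | hp2
      · simpa using h2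
      · have : ¬ (p - 1) ∣ 1 := by
          rw [Nat.dvd_one]
          have := hp.out.two_le
          omega
        simpa [hp2, this] using h2
    · rw [bernoulli_eq_zero_of_odd (odd_two_mul_add_one k) (by omega)]
      split_ifs <;> simp

lemma norm_bernoulli_mul_pow_div_le (hp5 : 5 ≤ p) {j s : ℕ} (hs : 3 ≤ s)
    (hjs : j ≠ 0 → (p - 1) ∣ j → p ≤ s) :
    ‖(bernoulli j : ℚ_[p]) * ((p : ℚ_[p]) ^ s / s)‖ ≤ (p : ℝ) ^ (-3 : ℤ) := by
  have hB := norm_bernoulli_le (p := p) j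
  have hps := norm_pow_div_natCast_le hp5 (s := s) (by omega)
  rw [norm_mul]
  by_cases hj : j ≠ 0 ∧ (p - 1) ∣ j
  · rw [if_pos hj] at hB
    rw [show min s 4 = 4 by have := hjs hj.1 hj.2; omega] at hps
    calc ‖(bernoulli j : ℚ_[p])‖ * ‖(p : ℚ_[p]) ^ s / s‖
        ≤ p * (p : ℝ) ^ (-(4 : ℕ) : ℤ) := by gcongr
      _ = (p : ℝ) ^ (-3 : ℤ) := by
        rw [← zpow_one_add₀ (by exact_mod_cast hp.out.ne_zero)]
        norm_num
  · rw [if_neg hj] at hB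
    calc ‖(bernoulli j : ℚ_[p])‖ * ‖(p : ℚ_[p]) ^ s / s‖
        ≤ 1 * (p : ℝ) ^ (-(min s 4 : ℕ) : ℤ) := by gcongr
      _ ≤ (p : ℝ) ^ (-3 : ℤ) := by
        rw [one_mul]
        exact zpow_le_zpow_right₀ (by exact_mod_cast hp.out.one_le) (by omega)

lemma norm_faulhaberTail_le (hp5 : 5 ≤ p) {m : ℕ} (hm : (p - 1) ∣ m) :
    ‖(faulhaberTail p m : ℚ_[p])‖ ≤ (p : ℝ) ^ (-3 : ℤ) := by
  rw [faulhaberTail]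
  push_cast
  refine IsUltrametricDist.norm_sum_le_of_forall_le_of_nonneg (by positivity) fun j hj => ?_
  have hjm : j < m := mem_range.mp hj
  rw [show (bernoulli j : ℚ_[p]) * (m.choose j : ℚ_[p]) * (p : ℚ_[p]) ^ (m + 1 - j)
      / ((m + 1 - j : ℕ) : ℚ_[p]) = (m.choose j : ℚ_[p]) * ((bernoulli j : ℚ_[p]) *
      ((p : ℚ_[p]) ^ (m + 1 - j) / ((m + 1 - j : ℕ) : ℚ_[p]))) by ring, norm_mul]
  refine (mul_le_of_le_one_left (norm_nonneg _)
    (IsUltrametricDist.norm_natCast_le_one ℚ_[p] _)).trans ?_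
  have hpm : p - 1 ≤ m := Nat.le_of_dvd (by omega) hm
  by_cases hlast : j + 1 = m
  · -- `m` is even, so `j = m - 1` is odd and `> 1`
    obtain ⟨r, hr⟩ := even_iff_two_dvd.mpr ((hp.out.even_sub_one (by omega)).two_dvd.trans hm)
    rw [bernoulli_eq_zero_of_odd ⟨r - 1, by omega⟩ (by omega)]
    simp only [Rat.cast_zero, zero_mul, norm_zero]
    positivity
  · refine norm_bernoulli_mul_pow_div_le hp5 (by omega) fun hj0 hpj => ?_
    have := Nat.le_of_dvd (by omega) (Nat.dvd_sub hm hpj)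
    omega

lemma pow_dvd_sum_Ico_of_forall (n : ℕ) (f : ℤ → ℤ)
    (hf : ∀ x, (p : ℤ) ∣ x - 1 → (p : ℤ) ^ n ∣ f x) :
    (p : ℤ) ^ n ∣ ∑ k ∈ Ico 1 p, f ((k : ℤ) ^ (p - 1)) := by
  refine dvd_sum fun k hk => hf _ (Int.prime_dvd_pow_sub_one hp.out ?_)
  obtain ⟨hk1, hkp⟩ := mem_Ico.mp hk
  exact Nat.isCoprime_iff_coprime.mpr
    (hp.out.coprime_iff_not_dvd.mpr (Nat.not_dvd_of_pos_of_lt hk1 hkp)).symm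

lemma dvd_fermatSum (i : ℕ) : (p : ℤ) ∣ fermatSum p i := by
  rw [← pow_one (p : ℤ)]
  exact pow_dvd_sum_Ico_of_forall 1 (fun x => x ^ i - 1) fun x hx => by
    simpa using hx.trans (sub_dvd_pow_sub_pow x 1 i)

lemma sq_dvd_two_mul_fermatSum_sub : (p : ℤ) ^ 2 ∣ 2 * fermatSum p 1 - fermatSum p 2 := by
  simp only [fermatSum, mul_sum, ← sum_sub_distrib]
  exact pow_dvd_sum_Ico_of_forall 2 (fun x => 2 * (x ^ 1 - 1) - (x ^ 2 - 1))
    fun x ⟨y, hy⟩ => ⟨-y ^ 2, by rw [← sub_add_cancel x 1, hy]; ring⟩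

lemma sq_dvd_three_mul_fermatSum_sub :
    (p : ℤ) ^ 2 ∣ 3 * fermatSum p 2 - 2 * fermatSum p 3 := by
  simp only [fermatSum, mul_sum, ← sum_sub_distrib]
  exact pow_dvd_sum_Ico_of_forall 2 (fun x => 3 * (x ^ 2 - 1) - 2 * (x ^ 3 - 1))
    fun x ⟨y, hy⟩ => ⟨-y ^ 2 * (3 + 2 * p * y), by rw [← sub_add_cancel x 1, hy]; ring⟩

lemma pow_three_dvd_three_mul_fermatSum_sub_add :
    (p : ℤ) ^ 3 ∣ 3 * fermatSum p 1 - 3 * fermatSum p 2 + fermatSum p 3 := by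
  simp only [fermatSum, mul_sum, ← sum_sub_distrib, ← sum_add_distrib]
  exact pow_dvd_sum_Ico_of_forall 3 (fun x => 3 * (x ^ 1 - 1) - 3 * (x ^ 2 - 1) + (x ^ 3 - 1))
    fun x ⟨y, hy⟩ => ⟨y ^ 3, by rw [← sub_add_cancel x 1, hy]; ring⟩

lemma natCast_mul_bernoulli_eq {i : ℕ} (hi : i ≠ 0) :
    (p : ℚ) * bernoulli (i * (p - 1)) =
      fermatSum p i + (p - 1) - faulhaberTail p (i * (p - 1)) := by
  have hm : i * (p - 1) ≠ 0 := mul_ne_zero hi (by have := hp.out.two_le; omega)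
  have hsum : ∑ k ∈ range p, (k : ℚ) ^ (i * (p - 1)) = fermatSum p i + (p - 1) := by
    rw [range_eq_Ico, sum_eq_sum_Ico_succ_bot hp.out.pos, fermatSum]
    push_cast
    rw [sum_sub_distrib, sum_const, Nat.card_Ico, nsmul_one, Nat.cast_sub hp.out.one_le]
    simp [zero_pow hm, ← pow_mul, mul_comm]
  linarith [sum_range_pow_eq_mul_bernoulli_add_faulhaberTail p (i * (p - 1))]

lemma exists_eq_pow_mul_of_norm_le {x : ℚ_[p]} {n : ℕ} (hx : ‖x‖ ≤ (p : ℝ) ^ (-n : ℤ)) :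
    ∃ z : ℤ_[p], x = p ^ n * z := by
  have hx1 : ‖x‖ ≤ 1 :=
    hx.trans (zpow_le_one_of_nonpos₀ (by exact_mod_cast hp.out.one_le) (by omega))
  obtain ⟨z, hz⟩ := Ideal.mem_span_singleton.mp
    ((PadicInt.norm_le_pow_iff_mem_span_pow (show ℤ_[p] from ⟨x, hx1⟩) n).mp hx)
  exact ⟨z, by exact_mod_cast congrArg ((↑) : ℤ_[p] → ℚ_[p]) hz⟩

lemma exists_eq_pow_mul_of_sub_one_mul_eq {x : ℚ_[p]} {a : ℤ} {τ : ℤ_[p]} {n k : ℕ}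
    (hnk : n ≤ k) (h : ((p : ℚ_[p]) - 1) * x = a - p ^ k * τ) (ha : (p : ℤ) ^ n ∣ a) :
    ∃ z : ℤ_[p], x = p ^ n * z := by
  refine exists_eq_pow_mul_of_norm_le ?_
  rw [← one_mul ‖x‖, ← norm_p_sub_one (p := p), ← norm_mul, h, sub_eq_add_neg]
  refine (IsUltrametricDist.norm_add_le_max _ _).trans (max_le ?_ ?_)
  · exact (Padic.norm_int_le_pow_iff_dvd a n).mpr ha
  · rw [norm_neg, norm_mul, Padic.norm_p_pow]
    calc (p : ℝ) ^ (-k : ℤ) * ‖(τ : ℚ_[p])‖ ≤ (p : ℝ) ^ (-k : ℤ) * 1 := by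
          gcongr
          exact τ.norm_le_one
      _ ≤ (p : ℝ) ^ (-n : ℤ) := by
          rw [mul_one]
          exact zpow_le_zpow_right₀ (by exact_mod_cast hp.out.one_le) (by omega)

end

/-- Lemma on Bernoulli combinations: for a prime `p > 3`, with
`V i = p·B_{i(p-1)}/(p-1) - 1 ∈ ℤ_p`, one has `V i ≡ 0 (mod p)` for all `i ≥ 1`,
`2V₁ - V₂ ≡ 0 (mod p²)`, `3V₂ - 2V₃ ≡ 0 (mod p²)`, and
`3V₁ - 3V₂ + V₃ ≡ 0 (mod p³)`. -/
theorem bernoulli_V_congruences (p : ℕ) [hp : Fact p.Prime] (h3 : 3 < p)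
    (V : ℕ → ℚ_[p])
    (hV : ∀ i, V i = (p : ℚ_[p]) * ((bernoulli (i * (p - 1)) : ℚ) : ℚ_[p]) / ((p : ℚ_[p]) - 1) - 1) :
    (∀ i, 1 ≤ i → ∃ z : ℤ_[p], V i = (p : ℚ_[p]) * (z : ℚ_[p])) ∧
    (∃ z : ℤ_[p], 2 * V 1 - V 2 = (p : ℚ_[p]) ^ 2 * (z : ℚ_[p])) ∧
    (∃ z : ℤ_[p], 3 * V 2 - 2 * V 3 = (p : ℚ_[p]) ^ 2 * (z : ℚ_[p])) ∧
    (∃ z : ℤ_[p], 3 * V 1 - 3 * V 2 + V 3 = (p : ℚ_[p]) ^ 3 * (z : ℚ_[p])) := by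
  have hp5 : 5 ≤ p := hp.out.five_le_of_ne_two_of_ne_three (by omega) (by omega)
  choose τ hτ using fun i =>
    exists_eq_pow_mul_of_norm_le (norm_faulhaberTail_le hp5 (dvd_mul_left (p - 1) i))
  have key (i : ℕ) (hi : i ≠ 0) :
      ((p : ℚ_[p]) - 1) * V i = fermatSum p i - (p : ℚ_[p]) ^ 3 * τ i := by
    have hB := congrArg ((↑) : ℚ → ℚ_[p]) (natCast_mul_bernoulli_eq (p := p) hi)
    push_cast at hB
    have hu : (p : ℚ_[p]) - 1 ≠ 0 := norm_ne_zero_iff.mp (by simp [norm_p_sub_one])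
    rw [hV, ← hτ i]
    field_simp
    linear_combination hB
  refine ⟨fun i hi => ?_, ?_, ?_, ?_⟩
  · simpa using exists_eq_pow_mul_of_sub_one_mul_eq (n := 1) (by norm_num) (key i (by omega))
      (by simpa using dvd_fermatSum i)
  · refine exists_eq_pow_mul_of_sub_one_mul_eq (τ := 2 * τ 1 - τ 2) (k := 3) (by norm_num) ?_
      sq_dvd_two_mul_fermatSum_sub
    push_cast
    linear_combination 2 * key 1 one_ne_zero - key 2 two_ne_zero
  · refine exists_eq_pow_mul_of_sub_one_mul_eq (τ := 3 * τ 2 - 2 * τ 3) (k := 3) (by norm_num) ?_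
      sq_dvd_three_mul_fermatSum_sub
    push_cast
    linear_combination 3 * key 2 two_ne_zero - 2 * key 3 three_ne_zero
  · refine exists_eq_pow_mul_of_sub_one_mul_eq (τ := 3 * τ 1 - 3 * τ 2 + τ 3) le_rfl ?_
      pow_three_dvd_three_mul_fermatSum_sub_add
    push_cast
    linear_combination 3 * key 1 one_ne_zero - 3 * key 2 two_ne_zero + key 3 three_ne_zero
end
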